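/- arXiv:2501.12045 — 7 statements merged into one kernel-verified Lean document; each statement's English description precedes it below -/
import Mathlib

section
/- A position (n_0, n_1, ..., n_{m-1}) in Moore's nim MN(m,k) is a P-position if and only if, when each n_i is written in binary, for each bit position the number of indices i with that bit of n_i equal to 1 is divisible by k+1. -/
/-- `IsN move x`: `x` is an N-position (next player wins) for the game with
move relation `move` (least fixed point; correct for short games). -/
inductive IsN {α : Type*} (move : α → α → Prop) : α → Prop
  | intro (x y : α) (hxy : move x y) (hy : ∀ z, move y z → IsN move z) : IsN move x

/-- `IsP move x`: `x` is a P-position (previous player wins) under normal play. -/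
def IsP {α : Type*} (move : α → α → Prop) (x : α) : Prop :=
  ∀ y, move x y → IsN move y

/-- Move relation of extended circular nim `ECN(m_S, k)`: reduce some piles,
all lying among `k` piles taken every `s`-th pile (for some `s ∈ S`) starting
at some index `i`, removing at least one token in total. -/
def ecnMove (m : ℕ) (S : Set ℕ) (k : ℕ) (x y : Fin m → ℕ) : Prop :=
  y ≠ x ∧ (∀ j, y j ≤ x j) ∧
    ∃ s ∈ S, ∃ i : ℕ, ∀ j : Fin m, y j ≠ x j → ∃ t < k, (j : ℕ) = (i + t * s) % m

/-- `cyc m Q n` : some cyclic rotation of `n`, or of its reversal, satisfies `Q`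
(the relation `M ∈_↻ P`). -/
def cyc (m : ℕ) (Q : (Fin m → ℕ) → Prop) (n : Fin m → ℕ) : Prop :=
  ∃ r : ℕ,
    Q (fun j => n ⟨(j.1 + r) % m, Nat.mod_lt _ (Nat.lt_of_le_of_lt (Nat.zero_le _) j.isLt)⟩) ∨
    Q (fun j => n ⟨(r + (m - j.1)) % m, Nat.mod_lt _ (Nat.lt_of_le_of_lt (Nat.zero_le _) j.isLt)⟩)

/-- Move relation of Moore's nim `MN(m, k)`: reduce at most `k` piles,
removing at least one token in total. -/
def mooreMove (m k : ℕ) (x y : Fin m → ℕ) : Prop :=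
  y ≠ x ∧ (∀ j, y j ≤ x j) ∧ (Finset.univ.filter (fun j => y j ≠ x j)).card ≤ k

/-!
Call a position balanced when every binary digit is set in a multiple of `k + 1` piles. At the
highest digit a move alters it only clears bits, in at most `k` piles, so no move joins two
balanced positions. Conversely Moore's greedy reduction, fixing digits from the top, reaches a
balanced position from any other while touching at most `k` piles. As play terminates, the
balanced positions are exactly the P-positions.
-/

open Finset

theorem isN_iff_exists_isP {α : Type*} {move : α → α → Prop} {x : α} :
    IsN move x ↔ ∃ y, move x y ∧ IsP move y :=
  ⟨fun ⟨_, y, hxy, hy⟩ => ⟨y, hxy, hy⟩, fun ⟨y, hxy, hy⟩ => .intro x y hxy hy⟩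

theorem isP_iff_of_wellFounded {α : Type*} {move : α → α → Prop} (hwf : WellFounded (flip move))
    {G : α → Prop} (hG : ∀ x y, G x → move x y → ¬ G y)
    (hnG : ∀ x, ¬ G x → ∃ y, move x y ∧ G y) (x : α) : IsP move x ↔ G x := by
  suffices (IsP move x ↔ G x) ∧ (IsN move x ↔ ¬ G x) from this.1
  induction x using hwf.induction with
  | _ x ih =>
    refine ⟨⟨fun hP => ?_, fun hx y hxy => (ih y hxy).2.2 (hG x y hx hxy)⟩, ?_⟩
    · by_contra hx
      obtain ⟨y, hxy, hy⟩ := hnG x hx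
      exact (ih y hxy).2.1 (hP y hxy) hy
    rw [isN_iff_exists_isP]
    refine ⟨fun ⟨y, hxy, hy⟩ hx => hG x y hx hxy ((ih y hxy).1.1 hy), fun hx => ?_⟩
    obtain ⟨y, hxy, hy⟩ := hnG x hx
    exact ⟨y, hxy, (ih y hxy).1.2 hy⟩

theorem Finset.exists_card_dvd_of_card_le {α : Type*} [DecidableEq α] {k : ℕ} {A : Finset α}
    (hA : #A ≤ k) (P : Finset α) :
    ∃ P' : Finset α, P' \ A ⊆ P ∧ #(A ∪ (P \ P')) ≤ k ∧ (k + 1) ∣ #P' := by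
  -- Either clear `r` bits outside `A` or, if that would touch too many piles, set `k + 1 - r`
  -- bits inside `A`.
  set r := #(P \ A) % (k + 1)
  have hr : r ≤ #(P \ A) := Nat.mod_le _ _
  have hrk : r < k + 1 := Nat.mod_lt _ k.succ_pos
  by_cases hAr : #A + r ≤ k
  · obtain ⟨T, hT, hTcard⟩ := exists_subset_card_eq hr
    refine ⟨(P \ A) \ T, sdiff_subset.trans (sdiff_subset.trans sdiff_subset), ?_, ?_⟩
    · calc #(A ∪ (P \ ((P \ A) \ T))) ≤ #(A ∪ T) :=
            card_le_card fun i => by simp only [mem_union, mem_sdiff]; tauto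
        _ ≤ #A + #T := card_union_le _ _
        _ ≤ k := by omega
    · rw [card_sdiff_of_subset hT, hTcard]
      exact Nat.dvd_sub_mod _
  · obtain ⟨S, hS, hScard⟩ := exists_subset_card_eq (show k + 1 - r ≤ #A by omega)
    refine ⟨S ∪ (P \ A), fun i => ?_, (card_le_card fun i => ?_).trans hA, ?_⟩
    · have := @hS i
      simp only [mem_sdiff, mem_union]
      tauto
    · simp only [mem_union, mem_sdiff]
      tauto
    · rw [card_union_of_disjoint (disjoint_sdiff.mono_left hS), hScard,
        show k + 1 - r + #(P \ A) = #(P \ A) - r + (k + 1) by omega]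
      exact dvd_add (Nat.dvd_sub_mod _) dvd_rfl

section

variable {ι : Type*} [Fintype ι]

def MooreBalanced (k : ℕ) (x : ι → ℕ) : Prop :=
  ∀ d : ℕ, (k + 1) ∣ #{i | (x i).testBit d}

theorem mooreBalanced_zero (k : ℕ) : MooreBalanced k (0 : ι → ℕ) := by
  simp [MooreBalanced]

theorem mooreBalanced_iff_odd_and_div_two {k : ℕ} {x : ι → ℕ} :
    MooreBalanced k x ↔ (k + 1) ∣ #{i | x i % 2 = 1} ∧ MooreBalanced k (fun i => x i / 2) := by
  rw [MooreBalanced, ← Nat.and_forall_add_one]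
  simp only [MooreBalanced, Nat.testBit_div_two, Nat.testBit_zero, decide_eq_true_eq]

theorem pi_div_two_induction {p : (ι → ℕ) → Prop} (zero : p 0)
    (half : ∀ x, p (fun i => x i / 2) → p x) (x : ι → ℕ) : p x := by
  suffices ∀ D, ∀ x : ι → ℕ, (∀ i, x i < 2 ^ D) → p x from
    this (∑ i, x i) x fun i =>
      (single_le_sum (fun j _ => Nat.zero_le (x j)) (mem_univ i)).trans_lt Nat.lt_two_pow_self
  intro D
  induction D with
  | zero =>
    intro x hx
    convert zero
    funext i
    simpa using hx i
  | succ D ih =>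
    intro x hx
    exact half x (ih _ fun i => by rw [Nat.div_lt_iff_lt_mul two_pos, ← pow_succ]; exact hx i)

theorem MooreBalanced.eq_of_le_of_card_ne_le {k : ℕ} {x y : ι → ℕ} (hx : MooreBalanced k x)
    (hy : MooreBalanced k y) (hle : y ≤ x) (hcard : #{i | y i ≠ x i} ≤ k) : y = x := by
  classical
  induction x using pi_div_two_induction generalizing y with
  | zero => exact le_antisymm hle fun i => Nat.zero_le _
  | half x ih =>
    rw [mooreBalanced_iff_odd_and_div_two] at hx hy
    have hhalf (i : ι) : y i / 2 = x i / 2 :=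
      congrFun (ih hx.2 hy.2 (fun i => Nat.div_le_div_right (hle i))
        ((card_le_card fun i => by simp only [mem_filter, mem_univ, true_and]; omega).trans hcard)) i
    set Ox : Finset ι := {i | x i % 2 = 1}
    set Oy : Finset ι := {i | y i % 2 = 1}
    have hsub : Oy ⊆ Ox := fun i => by
      have := hhalf i
      have : y i ≤ x i := hle i
      simp only [Ox, Oy, mem_filter, mem_univ, true_and]
      omega
    have hempty : #(Ox \ Oy) = 0 := by
      refine Nat.eq_zero_of_dvd_of_lt ?_ ((card_le_card fun i => ?_).trans_lt (Nat.lt_succ_of_le hcard))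
      · rw [card_sdiff_of_subset hsub]
        exact Nat.dvd_sub hx.1 hy.1
      · simp only [Ox, Oy, mem_sdiff, mem_filter, mem_univ, true_and]
        omega
    have hsup : Ox ⊆ Oy := sdiff_eq_empty_iff_subset.1 (card_eq_zero.1 hempty)
    funext i
    have hi := hhalf i
    have hyx := @hsub i
    have hxy := @hsup i
    simp only [Ox, Oy, mem_filter, mem_univ, true_and] at hyx hxy
    omega

theorem exists_mooreBalanced_le_of_card_le [DecidableEq ι] {k : ℕ} (x : ι → ℕ) {A : Finset ι}
    (hA : #A ≤ k) :
    ∃ y, MooreBalanced k y ∧ (∀ i ∉ A, y i ≤ x i) ∧ #(A ∪ ({i | y i ≠ x i} : Finset ι)) ≤ k := by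
  induction x using pi_div_two_induction generalizing A with
  | zero => exact ⟨0, mooreBalanced_zero k, fun i _ => le_rfl, by simpa using hA⟩
  | half x ih =>
    -- The higher digits are settled first; the piles changed there are free at the lowest digit.
    obtain ⟨q, hq, hqx, hqA⟩ := ih hA
    beta_reduce at hqx hqA
    obtain ⟨P', hP', hP'A, hdvd⟩ := exists_card_dvd_of_card_le hqA {i | x i % 2 = 1}
    set y : ι → ℕ := fun i => 2 * q i + if i ∈ P' then 1 else 0
    have hy (i : ι) : y i / 2 = q i ∧ (y i % 2 = 1 ↔ i ∈ P') := by
      by_cases h : i ∈ P'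
      · simp only [y, h, ↓reduceIte, iff_true]
        omega
      · simp only [y, h, ↓reduceIte, iff_false]
        omega
    have hyx {i : ι} (hi : i ∉ A) :
        y i ≤ x i ∧ (y i ≠ x i → q i ≠ x i / 2 ∨ x i % 2 = 1 ∧ i ∉ P') := by
      have := hqx i hi
      obtain ⟨hyq, hyP'⟩ := hy i
      by_cases hiP' : i ∈ P'
      · have := hyP'.2 hiP'
        have : q i = x i / 2 → x i % 2 = 1 := fun hqi => by
          simpa using @hP' i (by simp [hi, hqi, hiP'])
        simp only [hiP', not_true_eq_false, and_false, or_false]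
        omega
      · have := mt hyP'.1 hiP'
        simp only [hiP', not_false_eq_true, and_true]
        omega
    refine ⟨y, mooreBalanced_iff_odd_and_div_two.2 ⟨?_, ?_⟩, fun i hi => (hyx hi).1, ?_⟩
    · convert hdvd using 2
      ext i
      simp [hy]
    · convert hq using 1
      funext i
      exact (hy i).1
    · refine (card_le_card fun i => ?_).trans hP'A
      by_cases hiA : i ∈ A
      · simp [hiA]
      · simpa [hiA] using (hyx hiA).2

end

theorem wellFounded_flip_mooreMove (m k : ℕ) : WellFounded (flip (mooreMove m k)) :=
  Subrelation.wf (fun ⟨hne, hle, _⟩ => Fintype.sum_strictMono (lt_of_le_of_ne hle hne))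
    (measure fun x : Fin m → ℕ => ∑ i, x i).wf

theorem moore_P_iff (m k : ℕ) (n : Fin m → ℕ) :
    IsP (mooreMove m k) n ↔
      ∀ d : ℕ, (k + 1) ∣ (Finset.univ.filter (fun i => (n i).testBit d)).card := by
  refine isP_iff_of_wellFounded (wellFounded_flip_mooreMove m k) (G := MooreBalanced k) ?_ ?_ n
  · rintro x y hx ⟨hne, hle, hcard⟩ hy
    exact hne (hx.eq_of_le_of_card_ne_le hy hle hcard)
  · intro x hx
    obtain ⟨y, hy, hyx, hcard⟩ := exists_mooreBalanced_le_of_card_le x (A := ∅) (by simp)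
    refine ⟨y, ⟨?_, fun i => hyx i (notMem_empty i), by simpa using hcard⟩, hy⟩
    rintro rfl
    exact hx hy
end

section
/- A position (n_0, n_1, ..., n_{m-1}) in Moore's nim MN(m, m-1) is a P-position if and only if n_0 = n_1 = ... = n_{m-1}. -/
lemma moore_sum_lt {m : ℕ} {x y : Fin m → ℕ} (h : mooreMove m (m - 1) x y) :
    ∑ j, y j < ∑ j, x j := by
  obtain ⟨hne, hle, -⟩ := h
  apply Finset.sum_lt_sum (fun i _ => hle i)
  by_contra hcon
  push_neg at hcon
  exact hne (funext fun j => le_antisymm (hle j) (hcon j (Finset.mem_univ j)))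

lemma moore_break {m : ℕ} {x y : Fin m → ℕ} (hx : ∀ i j : Fin m, x i = x j)
    (h : mooreMove m (m - 1) x y) : ¬ ∀ i j : Fin m, y i = y j := by
  obtain ⟨hne, hle, hcard⟩ := h
  have hm : 0 < m := by
    rcases Nat.eq_zero_or_pos m with h0 | h
    · exact absurd (funext fun j : Fin m => Fin.elim0 (h0 ▸ j)) hne
    · exact h
  obtain ⟨j0, hj0⟩ := Function.ne_iff.mp hne
  have hEx : ∃ j, y j = x j := by
    by_contra hall
    push_neg at hall
    have : (Finset.univ.filter (fun j => y j ≠ x j)) = Finset.univ :=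
      Finset.eq_univ_of_forall fun j => Finset.mem_filter.mpr ⟨Finset.mem_univ j, hall j⟩
    rw [this] at hcard
    simp at hcard
    omega
  obtain ⟨j1, hj1⟩ := hEx
  intro hyeq
  apply hj0
  have h1 : y j0 = y j1 := hyeq j0 j1
  have h2 : x j1 = x j0 := hx j1 j0
  rw [h1, hj1, h2]

lemma moore_to_eq {m : ℕ} {x : Fin m → ℕ} (hx : ¬ ∀ i j : Fin m, x i = x j) :
    ∃ z : Fin m → ℕ, mooreMove m (m - 1) x z ∧ ∀ i j : Fin m, z i = z j := by
  push_neg at hx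
  obtain ⟨i, j, hij⟩ := hx
  obtain ⟨i0, -, hi0⟩ := Finset.exists_min_image Finset.univ x ⟨i, Finset.mem_univ i⟩
  refine ⟨fun _ => x i0, ⟨?_, fun j => hi0 j (Finset.mem_univ j), ?_⟩, fun _ _ => rfl⟩
  · intro h
    have h1 : x i0 = x i := congrFun h i
    have h2 : x i0 = x j := congrFun h j
    exact hij (h1.symm.trans h2)
  · have hsub : Finset.univ.filter (fun j => (fun _ => x i0) j ≠ x j) ⊆
        Finset.univ.erase i0 := by
      intro j hj
      simp only [Finset.mem_filter] at hj
      refine Finset.mem_erase.mpr ⟨fun hji0 => hj.2 (by rw [hji0]), Finset.mem_univ j⟩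
    calc (Finset.univ.filter (fun j => (fun _ => x i0) j ≠ x j)).card
        ≤ (Finset.univ.erase i0).card := Finset.card_le_card hsub
      _ = m - 1 := by
          rw [Finset.card_erase_of_mem (Finset.mem_univ i0)]
          simp

lemma moore_isN_of_ne {m : ℕ} (N : ℕ) : ∀ x : Fin m → ℕ, ∑ j, x j ≤ N →
    (¬ ∀ i j : Fin m, x i = x j) → IsN (mooreMove m (m - 1)) x := by
  induction N with
  | zero =>
    intro x hx hne
    exfalso
    apply hne
    intro i j
    have hz : ∀ k, x k = 0 := fun k => Nat.le_zero.mp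
      (le_trans (Finset.single_le_sum (f := x) (fun _ _ => Nat.zero_le _)
        (Finset.mem_univ k)) hx)
    rw [hz i, hz j]
  | succ N ih =>
    intro x hx hne
    obtain ⟨z, hmv, hzeq⟩ := moore_to_eq hne
    refine IsN.intro x z hmv ?_
    intro w hw
    have h1 := moore_sum_lt hw
    have h2 := moore_sum_lt hmv
    exact ih w (by omega) (moore_break hzeq hw)

lemma moore_not_isN_of_eq {m : ℕ} (N : ℕ) : ∀ x : Fin m → ℕ, ∑ j, x j ≤ N →
    (∀ i j : Fin m, x i = x j) → ¬ IsN (mooreMove m (m - 1)) x := by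
  induction N with
  | zero =>
    intro x hx heq hN
    obtain ⟨_, y, hxy, _⟩ := hN
    have := moore_sum_lt hxy
    omega
  | succ N ih =>
    intro x hx heq hN
    obtain ⟨_, y, hxy, hy⟩ := hN
    have hyne := moore_break heq hxy
    obtain ⟨z, hmv, hzeq⟩ := moore_to_eq hyne
    have h1 := moore_sum_lt hmv
    have h2 := moore_sum_lt hxy
    exact ih z (by omega) hzeq (hy z hmv)

theorem moore_pred_P_iff (m : ℕ) (n : Fin m → ℕ) :
    IsP (mooreMove m (m - 1)) n ↔ ∀ i j : Fin m, n i = n j := by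
  constructor
  · intro hP
    by_contra hne
    obtain ⟨z, hmv, hzeq⟩ := moore_to_eq hne
    exact moore_not_isN_of_eq (∑ j, z j) z le_rfl hzeq (hP z hmv)
  · intro heq y hy
    exact moore_isN_of_ne (∑ j, y j) y le_rfl (moore_break heq hy)
end

section
/- A position (n_0, n_1, n_2, n_3) in circular nim CN(4,2) is a P-position if and only if n_0 = n_2 and n_1 = n_3. -/
lemma cn42_move_sum_lt {x y : Fin 4 → ℕ} (h : ecnMove 4 {1} 2 x y) :
    ∑ j, y j < ∑ j, x j := by
  obtain ⟨hne, hle, _⟩ := h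
  obtain ⟨j, hj⟩ := Function.ne_iff.mp hne
  exact Finset.sum_lt_sum (fun i _ => hle i)
    ⟨j, Finset.mem_univ j, lt_of_le_of_ne (hle j) hj⟩

lemma cn42_not_isP_of_isN {α : Type*} {move : α → α → Prop} {x : α}
    (hN : IsN move x) : ¬ IsP move x := by
  induction hN with
  | intro x y hxy hy IH =>
    intro hP
    cases hP y hxy with
    | intro _ z hyz hz => exact IH z hyz hz

lemma cn42_moveCases {x y : Fin 4 → ℕ} (h : ecnMove 4 {1} 2 x y) :
    (y 2 = x 2 ∧ y 3 = x 3) ∨ (y 3 = x 3 ∧ y 0 = x 0) ∨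
    (y 0 = x 0 ∧ y 1 = x 1) ∨ (y 1 = x 1 ∧ y 2 = x 2) := by
  obtain ⟨-, -, s, hs, i, hi⟩ := h
  simp only [Set.mem_singleton_iff] at hs
  subst hs
  have key : ∀ c : Fin 4, y c = x c ∨ ((c : ℕ) = i % 4 ∨ (c : ℕ) = (i + 1) % 4) := by
    intro c
    by_cases hc : y c = x c
    · exact Or.inl hc
    · obtain ⟨t, ht, hjt⟩ := hi c hc
      interval_cases t
      · exact Or.inr (Or.inl (by simpa using hjt))
      · exact Or.inr (Or.inr (by simpa using hjt))
  have k0 := key 0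
  have k1 := key 1
  have k2 := key 2
  have k3 := key 3
  simp only [Fin.val_zero, Fin.val_one] at k0 k1
  have h2 : ((2 : Fin 4) : ℕ) = 2 := rfl
  have h3 : ((3 : Fin 4) : ℕ) = 3 := rfl
  rw [h2] at k2
  rw [h3] at k3
  omega

lemma cn42_mkMove (x y : Fin 4 → ℕ) (i : ℕ) (hne : y ≠ x) (hle : ∀ j, y j ≤ x j)
    (h : ∀ j : Fin 4, y j ≠ x j → (j : ℕ) = i % 4 ∨ (j : ℕ) = (i + 1) % 4) :
    ecnMove 4 {1} 2 x y := by
  refine ⟨hne, hle, 1, rfl, i, fun j hj => ?_⟩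
  rcases h j hj with h' | h'
  · exact ⟨0, by norm_num, by simpa using h'⟩
  · exact ⟨1, by norm_num, by simpa using h'⟩

lemma cn42_toBalanced (n : Fin 4 → ℕ) (h : ¬(n 0 = n 2 ∧ n 1 = n 3)) :
    ∃ y, ecnMove 4 {1} 2 n y ∧ y 0 = y 2 ∧ y 1 = y 3 := by
  set a := min (n 0) (n 2) with ha
  set b := min (n 1) (n 3) with hb
  refine ⟨![a, b, a, b], ?_, by simp, by simp⟩
  have hne : ![a, b, a, b] ≠ n := by
    intro he
    have e0 : a = n 0 := congrFun he 0
    have e1 : b = n 1 := congrFun he 1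
    have e2 : a = n 2 := congrFun he 2
    have e3 : b = n 3 := congrFun he 3
    exact h ⟨by omega, by omega⟩
  have hle : ∀ j, ![a, b, a, b] j ≤ n j := by
    intro j
    fin_cases j <;> simp [ha, hb]
  rcases le_or_gt (n 0) (n 2) with h02 | h02 <;>
    rcases le_or_gt (n 1) (n 3) with h13 | h13
  · -- changed piles ⊆ {2,3}
    refine cn42_mkMove n _ 2 hne hle ?_
    intro j hj
    fin_cases j <;> simp_all <;> omega
  · -- changed piles ⊆ {1,2}
    refine cn42_mkMove n _ 1 hne hle ?_
    intro j hj
    fin_cases j <;> simp_all <;> omega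
  · -- changed piles ⊆ {3,0}
    refine cn42_mkMove n _ 3 hne hle ?_
    intro j hj
    fin_cases j <;> simp_all <;> omega
  · -- changed piles ⊆ {0,1}
    refine cn42_mkMove n _ 0 hne hle ?_
    intro j hj
    fin_cases j <;> simp_all <;> omega

lemma cn42_balanced_move {x y : Fin 4 → ℕ} (hb : x 0 = x 2 ∧ x 1 = x 3)
    (h : ecnMove 4 {1} 2 x y) : ¬(y 0 = y 2 ∧ y 1 = y 3) := by
  have hne := h.1
  have hc := cn42_moveCases h
  rintro ⟨e02, e13⟩
  apply hne
  have key : y 0 = x 0 ∧ y 1 = x 1 ∧ y 2 = x 2 ∧ y 3 = x 3 := by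
    obtain ⟨hb1, hb2⟩ := hb
    omega
  funext j
  fin_cases j
  · exact key.1
  · exact key.2.1
  · exact key.2.2.1
  · exact key.2.2.2

lemma cn42_main : ∀ N : ℕ, ∀ n : Fin 4 → ℕ, (∑ j, n j) ≤ N →
    ((n 0 = n 2 ∧ n 1 = n 3) → IsP (ecnMove 4 {1} 2) n) ∧
    (¬(n 0 = n 2 ∧ n 1 = n 3) → IsN (ecnMove 4 {1} 2) n) := by
  intro N
  induction N using Nat.strong_induction_on with
  | _ N IH =>
    intro n hsum
    constructor
    · intro hb y hmove
      have hlt := cn42_move_sum_lt hmove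
      have hub := cn42_balanced_move hb hmove
      exact (IH (∑ j, y j) (lt_of_lt_of_le hlt hsum) y le_rfl).2 hub
    · intro hub
      obtain ⟨y, hmove, hby⟩ := cn42_toBalanced n hub
      have hlt := cn42_move_sum_lt hmove
      exact IsN.intro n y hmove
        ((IH (∑ j, y j) (lt_of_lt_of_le hlt hsum) y le_rfl).1 hby)

theorem cn42_P_iff (n : Fin 4 → ℕ) :
    IsP (ecnMove 4 {1} 2) n ↔ n 0 = n 2 ∧ n 1 = n 3 := by
  constructor
  · intro hP
    by_contra h
    exact cn42_not_isP_of_isN ((cn42_main (∑ j, n j) n le_rfl).2 h) hP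
  · intro hb
    exact (cn42_main (∑ j, n j) n le_rfl).1 hb
end

section
/- A position M = (n_0, n_1, n_2, n_3, n_4) in circular nim CN(5,3) is a P-position if and only if some cyclic rotation or reflection of M lies in the set {(n_0,...,n_4) : n_0 = 0 and n_1 = n_2 + n_3 = n_4}. -/
set_option maxHeartbeats 1000000

def Shape5 (a b c d e : ℕ) : Prop := a = 0 ∧ b = c + d ∧ c + d = e

def P5 (n : Fin 5 → ℕ) : Prop :=
  Shape5 (n 0) (n 1) (n 2) (n 3) (n 4) ∨ Shape5 (n 1) (n 2) (n 3) (n 4) (n 0) ∨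
  Shape5 (n 2) (n 3) (n 4) (n 0) (n 1) ∨ Shape5 (n 3) (n 4) (n 0) (n 1) (n 2) ∨
  Shape5 (n 4) (n 0) (n 1) (n 2) (n 3)

def Premove (x y : Fin 5 → ℕ) : Prop :=
  (∀ j, y j ≤ x j) ∧ ∃ i : ℕ, ∀ j : Fin 5, y j ≠ x j → ∃ t < 3, (j : ℕ) = (i + t) % 5

lemma val_congr (f : Fin 5 → ℕ) (k l : ℕ) (hk : k < 5) (hl : l < 5) (h : k = l) :
    f ⟨k, hk⟩ = f ⟨l, hl⟩ := by subst h; rfl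

lemma forall5 {P : Fin 5 → Prop} (h0 : P 0) (h1 : P 1) (h2 : P 2) (h3 : P 3) (h4 : P 4) :
    ∀ j, P j := by
  intro j
  fin_cases j
  exacts [h0, h1, h2, h3, h4]

lemma mkPre (x y : Fin 5 → ℕ) (i : ℕ) (hle : ∀ j, y j ≤ x j)
    (hfix : ∀ j : Fin 5, (j:ℕ) ≠ i % 5 → (j:ℕ) ≠ (i+1) % 5 → (j:ℕ) ≠ (i+2) % 5 → y j = x j) :
    Premove x y := by
  refine ⟨hle, i, ?_⟩
  intro j hj
  by_contra hall
  push_neg at hall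
  refine hj (hfix j ?_ ?_ ?_)
  · have := hall 0 (by omega); omega
  · have := hall 1 (by omega); omega
  · have := hall 2 (by omega); omega

lemma pre_to_move (x y : Fin 5 → ℕ) (hx : ¬ P5 x) (hy : P5 y) (hp : Premove x y) :
    ecnMove 5 {1} 3 x y := by
  obtain ⟨hle, i, hwin⟩ := hp
  refine ⟨fun h => hx (h ▸ hy), hle, 1, rfl, i, ?_⟩
  intro j hj
  obtain ⟨t, ht, he⟩ := hwin j hj
  exact ⟨t, ht, by omega⟩

lemma P5_rot_back (y : Fin 5 → ℕ) (h : P5 y) :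
    P5 (fun j : Fin 5 => y ⟨((j:ℕ) + 4) % 5, by omega⟩) := by
  show Shape5 (y 4) (y 0) (y 1) (y 2) (y 3) ∨ Shape5 (y 0) (y 1) (y 2) (y 3) (y 4) ∨
    Shape5 (y 1) (y 2) (y 3) (y 4) (y 0) ∨ Shape5 (y 2) (y 3) (y 4) (y 0) (y 1) ∨
    Shape5 (y 3) (y 4) (y 0) (y 1) (y 2)
  rcases h with h|h|h|h|h
  · exact Or.inr (Or.inl h)
  · exact Or.inr (Or.inr (Or.inl h))
  · exact Or.inr (Or.inr (Or.inr (Or.inl h)))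
  · exact Or.inr (Or.inr (Or.inr (Or.inr h)))
  · exact Or.inl h

lemma P5_rev_back (y : Fin 5 → ℕ) (h : P5 y) :
    P5 (fun j : Fin 5 => y ⟨(5 - (j:ℕ)) % 5, by omega⟩) := by
  show Shape5 (y 0) (y 4) (y 3) (y 2) (y 1) ∨ Shape5 (y 4) (y 3) (y 2) (y 1) (y 0) ∨
    Shape5 (y 3) (y 2) (y 1) (y 0) (y 4) ∨ Shape5 (y 2) (y 1) (y 0) (y 4) (y 3) ∨
    Shape5 (y 1) (y 0) (y 4) (y 3) (y 2)
  rcases h with ⟨p1,p2,p3⟩|⟨p1,p2,p3⟩|⟨p1,p2,p3⟩|⟨p1,p2,p3⟩|⟨p1,p2,p3⟩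
  · exact Or.inl ⟨by omega, by omega, by omega⟩
  · exact Or.inr (Or.inr (Or.inr (Or.inr ⟨by omega, by omega, by omega⟩)))
  · exact Or.inr (Or.inr (Or.inr (Or.inl ⟨by omega, by omega, by omega⟩)))
  · exact Or.inr (Or.inr (Or.inl ⟨by omega, by omega, by omega⟩))
  · exact Or.inr (Or.inl ⟨by omega, by omega, by omega⟩)

lemma premE_rot (x : Fin 5 → ℕ)
    (h : ∃ y, Premove (fun j : Fin 5 => x ⟨((j:ℕ) + 1) % 5, by omega⟩) y ∧ P5 y) :
    ∃ y, Premove x y ∧ P5 y := by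
  obtain ⟨y, ⟨hle, i, hwin⟩, hP⟩ := h
  refine ⟨fun j : Fin 5 => y ⟨((j:ℕ) + 4) % 5, by omega⟩, ⟨?_, i + 1, ?_⟩, P5_rot_back y hP⟩
  · intro j
    have h1 : y ⟨((j:ℕ) + 4) % 5, by omega⟩ ≤ x ⟨((((j:ℕ) + 4) % 5) + 1) % 5, by omega⟩ :=
      hle ⟨((j:ℕ) + 4) % 5, by omega⟩
    have h2 : x ⟨((((j:ℕ) + 4) % 5) + 1) % 5, by omega⟩ = x j :=
      val_congr x _ ((j:ℕ)) (by omega) j.isLt (by omega)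
    exact le_of_le_of_eq h1 h2
  · intro j hj
    have h2 : x ⟨((((j:ℕ) + 4) % 5) + 1) % 5, by omega⟩ = x j :=
      val_congr x _ ((j:ℕ)) (by omega) j.isLt (by omega)
    have hj' : y ⟨((j:ℕ) + 4) % 5, by omega⟩ ≠ x ⟨((((j:ℕ) + 4) % 5) + 1) % 5, by omega⟩ :=
      fun hc => hj (hc.trans h2)
    obtain ⟨t, ht, hidx⟩ := hwin ⟨((j:ℕ) + 4) % 5, by omega⟩ hj'
    have hl5 : (j:ℕ) < 5 := j.isLt
    have hidx' : ((j:ℕ) + 4) % 5 = (i + t) % 5 := hidx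
    exact ⟨t, ht, by omega⟩

lemma premE_rev (x : Fin 5 → ℕ)
    (h : ∃ y, Premove (fun j : Fin 5 => x ⟨(5 - (j:ℕ)) % 5, by omega⟩) y ∧ P5 y) :
    ∃ y, Premove x y ∧ P5 y := by
  obtain ⟨y, ⟨hle, i, hwin⟩, hP⟩ := h
  refine ⟨fun j : Fin 5 => y ⟨(5 - (j:ℕ)) % 5, by omega⟩, ⟨?_, 8 - i % 5, ?_⟩, P5_rev_back y hP⟩
  · intro j
    have h1 : y ⟨(5 - (j:ℕ)) % 5, by omega⟩ ≤ x ⟨(5 - ((5 - (j:ℕ)) % 5)) % 5, by omega⟩ :=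
      hle ⟨(5 - (j:ℕ)) % 5, by omega⟩
    have h2 : x ⟨(5 - ((5 - (j:ℕ)) % 5)) % 5, by omega⟩ = x j := by
      have hl5 : (j:ℕ) < 5 := j.isLt
      exact val_congr x _ ((j:ℕ)) (by omega) j.isLt (by omega)
    exact le_of_le_of_eq h1 h2
  · intro j hj
    have hl5 : (j:ℕ) < 5 := j.isLt
    have h2 : x ⟨(5 - ((5 - (j:ℕ)) % 5)) % 5, by omega⟩ = x j :=
      val_congr x _ ((j:ℕ)) (by omega) j.isLt (by omega)
    have hj' : y ⟨(5 - (j:ℕ)) % 5, by omega⟩ ≠ x ⟨(5 - ((5 - (j:ℕ)) % 5)) % 5, by omega⟩ :=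
      fun hc => hj (hc.trans h2)
    obtain ⟨t, ht, hidx⟩ := hwin ⟨(5 - (j:ℕ)) % 5, by omega⟩ hj'
    have hidx' : (5 - (j:ℕ)) % 5 = (i + t) % 5 := hidx
    exact ⟨2 - t, by omega, by omega⟩

lemma B0 (x : Fin 5 → ℕ) (h1 : x 0 ≤ x 1) (h2 : x 0 ≤ x 2) (h3 : x 0 ≤ x 3)
    (h4 : x 0 ≤ x 4) (hbe : x 1 ≤ x 4) : ∃ y, Premove x y ∧ P5 y := by
  by_cases q1 : x 1 ≤ x 0
  · -- then
    refine ⟨![x 0, x 1, x 0 - x 1, x 0, 0], mkPre x _ 2 ?_ ?_, ?_⟩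
    · intro j; fin_cases j
      · show x 0 ≤ x 0; omega
      · show x 1 ≤ x 1; omega
      · show x 0 - x 1 ≤ x 2; omega
      · show x 0 ≤ x 3; omega
      · show 0 ≤ x 4; omega
    · intro j hj0 hj1 hj2; fin_cases j
      · rfl
      · rfl
      · exact absurd rfl hj0
      · exact absurd rfl hj1
      · exact absurd rfl hj2
    · have hS : Shape5 (0) (x 0) (x 1) (x 0 - x 1) (x 0) := by refine ⟨?_, ?_, ?_⟩ <;> omega
      exact Or.inr (Or.inr (Or.inr (Or.inr hS)))
  · -- else
    by_cases q2 : x 4 ≤ x 0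
    · -- then
      refine ⟨![x 0, 0, x 0, x 0 - x 4, x 4], mkPre x _ 1 ?_ ?_, ?_⟩
      · intro j; fin_cases j
        · show x 0 ≤ x 0; omega
        · show 0 ≤ x 1; omega
        · show x 0 ≤ x 2; omega
        · show x 0 - x 4 ≤ x 3; omega
        · show x 4 ≤ x 4; omega
      · intro j hj0 hj1 hj2; fin_cases j
        · rfl
        · exact absurd rfl hj0
        · exact absurd rfl hj1
        · exact absurd rfl hj2
        · rfl
      · have hS : Shape5 (0) (x 0) (x 0 - x 4) (x 4) (x 0) := by refine ⟨?_, ?_, ?_⟩ <;> omega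
        exact Or.inr (Or.inl hS)
    · -- else
      by_cases q3 : x 1 ≤ x 3
      · -- then
        refine ⟨![x 0, x 1, 0, x 1, x 1 - x 0], mkPre x _ 2 ?_ ?_, ?_⟩
        · intro j; fin_cases j
          · show x 0 ≤ x 0; omega
          · show x 1 ≤ x 1; omega
          · show 0 ≤ x 2; omega
          · show x 1 ≤ x 3; omega
          · show x 1 - x 0 ≤ x 4; omega
        · intro j hj0 hj1 hj2; fin_cases j
          · rfl
          · rfl
          · exact absurd rfl hj0
          · exact absurd rfl hj1
          · exact absurd rfl hj2
        · have hS : Shape5 (0) (x 1) (x 1 - x 0) (x 0) (x 1) := by refine ⟨?_, ?_, ?_⟩ <;> omega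
          exact Or.inr (Or.inr (Or.inl hS))
      · -- else
        by_cases q4 : x 2 + x 3 ≤ x 1
        · -- then
          refine ⟨![0, x 2 + x 3, x 2, x 3, x 2 + x 3], mkPre x _ 4 ?_ ?_, ?_⟩
          · intro j; fin_cases j
            · show 0 ≤ x 0; omega
            · show x 2 + x 3 ≤ x 1; omega
            · show x 2 ≤ x 2; omega
            · show x 3 ≤ x 3; omega
            · show x 2 + x 3 ≤ x 4; omega
          · intro j hj0 hj1 hj2; fin_cases j
            · exact absurd rfl hj1
            · exact absurd rfl hj2
            · rfl
            · rfl
            · exact absurd rfl hj0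
          · have hS : Shape5 (0) (x 2 + x 3) (x 2) (x 3) (x 2 + x 3) := by refine ⟨?_, ?_, ?_⟩ <;> omega
            exact Or.inl hS
        · -- else
          by_cases q5 : x 2 ≤ x 1
          · -- then
            refine ⟨![0, x 1, x 2, x 1 - x 2, x 1], mkPre x _ 3 ?_ ?_, ?_⟩
            · intro j; fin_cases j
              · show 0 ≤ x 0; omega
              · show x 1 ≤ x 1; omega
              · show x 2 ≤ x 2; omega
              · show x 1 - x 2 ≤ x 3; omega
              · show x 1 ≤ x 4; omega
            · intro j hj0 hj1 hj2; fin_cases j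
              · exact absurd rfl hj2
              · rfl
              · rfl
              · exact absurd rfl hj0
              · exact absurd rfl hj1
            · have hS : Shape5 (0) (x 1) (x 2) (x 1 - x 2) (x 1) := by refine ⟨?_, ?_, ?_⟩ <;> omega
              exact Or.inl hS
          · -- else
            by_cases q6 : x 0 ≤ 0
            · -- then
              refine ⟨![x 0, x 1, min (x 2) (x 1), x 1 - min (x 2) (x 1), x 1], mkPre x _ 2 ?_ ?_, ?_⟩
              · intro j; fin_cases j
                · show x 0 ≤ x 0; omega
                · show x 1 ≤ x 1; omega
                · show min (x 2) (x 1) ≤ x 2; omega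
                · show x 1 - min (x 2) (x 1) ≤ x 3; omega
                · show x 1 ≤ x 4; omega
              · intro j hj0 hj1 hj2; fin_cases j
                · rfl
                · rfl
                · exact absurd rfl hj0
                · exact absurd rfl hj1
                · exact absurd rfl hj2
              · have hS : Shape5 (x 0) (x 1) (min (x 2) (x 1)) (x 1 - min (x 2) (x 1)) (x 1) := by refine ⟨?_, ?_, ?_⟩ <;> omega
                exact Or.inl hS
            · -- else
              by_cases q7 : x 4 ≤ x 1
              · -- then
                refine ⟨![0, x 4, x 4 - x 3, x 3, x 4], mkPre x _ 0 ?_ ?_, ?_⟩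
                · intro j; fin_cases j
                  · show 0 ≤ x 0; omega
                  · show x 4 ≤ x 1; omega
                  · show x 4 - x 3 ≤ x 2; omega
                  · show x 3 ≤ x 3; omega
                  · show x 4 ≤ x 4; omega
                · intro j hj0 hj1 hj2; fin_cases j
                  · exact absurd rfl hj0
                  · exact absurd rfl hj1
                  · exact absurd rfl hj2
                  · rfl
                  · rfl
                · have hS : Shape5 (0) (x 4) (x 4 - x 3) (x 3) (x 4) := by refine ⟨?_, ?_, ?_⟩ <;> omega
                  exact Or.inl hS
              · -- else
                by_cases q8 : x 2 ≤ x 0 + x 1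
                · by_cases q9 : x 2 ≤ x 4
                  · -- L8
                    refine ⟨![x 2 - x 1, x 1, x 2, 0, x 2], mkPre x _ 3 ?_ ?_, ?_⟩
                    · intro j; fin_cases j
                      · show x 2 - x 1 ≤ x 0; omega
                      · show x 1 ≤ x 1; omega
                      · show x 2 ≤ x 2; omega
                      · show 0 ≤ x 3; omega
                      · show x 2 ≤ x 4; omega
                    · intro j hj0 hj1 hj2; fin_cases j
                      · exact absurd rfl hj2
                      · rfl
                      · rfl
                      · exact absurd rfl hj0
                      · exact absurd rfl hj1
                    · have hS : Shape5 (0) (x 2) (x 2 - x 1) (x 1) (x 2) := by refine ⟨?_, ?_, ?_⟩ <;> omega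
                      exact Or.inr (Or.inr (Or.inr (Or.inl hS)))
                  · -- L9
                    refine ⟨![x 0, x 4 - x 0, x 4, 0, x 4], mkPre x _ 1 ?_ ?_, ?_⟩
                    · intro j; fin_cases j
                      · show x 0 ≤ x 0; omega
                      · show x 4 - x 0 ≤ x 1; omega
                      · show x 4 ≤ x 2; omega
                      · show 0 ≤ x 3; omega
                      · show x 4 ≤ x 4; omega
                    · intro j hj0 hj1 hj2; fin_cases j
                      · rfl
                      · exact absurd rfl hj0
                      · exact absurd rfl hj1
                      · exact absurd rfl hj2
                      · rfl
                    · have hS : Shape5 (0) (x 4) (x 0) (x 4 - x 0) (x 4) := by refine ⟨?_, ?_, ?_⟩ <;> omega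
                      exact Or.inr (Or.inr (Or.inr (Or.inl hS)))
                · by_cases q10 : x 0 + x 1 ≤ x 4
                  · -- L10
                    refine ⟨![x 0, x 1, x 0 + x 1, 0, x 0 + x 1], mkPre x _ 2 ?_ ?_, ?_⟩
                    · intro j; fin_cases j
                      · show x 0 ≤ x 0; omega
                      · show x 1 ≤ x 1; omega
                      · show x 0 + x 1 ≤ x 2; omega
                      · show 0 ≤ x 3; omega
                      · show x 0 + x 1 ≤ x 4; omega
                    · intro j hj0 hj1 hj2; fin_cases j
                      · rfl
                      · rfl
                      · exact absurd rfl hj0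
                      · exact absurd rfl hj1
                      · exact absurd rfl hj2
                    · have hS : Shape5 (0) (x 0 + x 1) (x 0) (x 1) (x 0 + x 1) := by refine ⟨?_, ?_, ?_⟩ <;> omega
                      exact Or.inr (Or.inr (Or.inr (Or.inl hS)))
                  · -- L11
                    refine ⟨![x 0, x 4 - x 0, x 4, 0, x 4], mkPre x _ 1 ?_ ?_, ?_⟩
                    · intro j; fin_cases j
                      · show x 0 ≤ x 0; omega
                      · show x 4 - x 0 ≤ x 1; omega
                      · show x 4 ≤ x 2; omega
                      · show 0 ≤ x 3; omega
                      · show x 4 ≤ x 4; omega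
                    · intro j hj0 hj1 hj2; fin_cases j
                      · rfl
                      · exact absurd rfl hj0
                      · exact absurd rfl hj1
                      · exact absurd rfl hj2
                      · rfl
                    · have hS : Shape5 (0) (x 4) (x 0) (x 4 - x 0) (x 4) := by refine ⟨?_, ?_, ?_⟩ <;> omega
                      exact Or.inr (Or.inr (Or.inr (Or.inl hS)))

lemma min0 (x : Fin 5 → ℕ) (h1 : x 0 ≤ x 1) (h2 : x 0 ≤ x 2) (h3 : x 0 ≤ x 3)
    (h4 : x 0 ≤ x 4) : ∃ y, Premove x y ∧ P5 y := by
  by_cases hbe : x 1 ≤ x 4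
  · exact B0 x h1 h2 h3 h4 hbe
  · apply premE_rev x
    apply B0
    · exact h4
    · exact h3
    · exact h2
    · exact h1
    · show x 4 ≤ x 1
      omega

lemma exists_pre (x : Fin 5 → ℕ) : ∃ y, Premove x y ∧ P5 y := by
  by_cases m0 : x 0 ≤ x 1 ∧ x 0 ≤ x 2 ∧ x 0 ≤ x 3 ∧ x 0 ≤ x 4
  · apply min0
    · exact m0.1
    · exact m0.2.1
    · exact m0.2.2.1
    · exact m0.2.2.2
  · -- next
    by_cases m1 : x 1 ≤ x 2 ∧ x 1 ≤ x 3 ∧ x 1 ≤ x 4 ∧ x 1 ≤ x 0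
    · apply premE_rot _
      apply min0
      · exact m1.1
      · exact m1.2.1
      · exact m1.2.2.1
      · exact m1.2.2.2
    · -- next
      by_cases m2 : x 2 ≤ x 3 ∧ x 2 ≤ x 4 ∧ x 2 ≤ x 0 ∧ x 2 ≤ x 1
      · apply premE_rot _
        apply premE_rot _
        apply min0
        · exact m2.1
        · exact m2.2.1
        · exact m2.2.2.1
        · exact m2.2.2.2
      · -- next
        by_cases m3 : x 3 ≤ x 4 ∧ x 3 ≤ x 0 ∧ x 3 ≤ x 1 ∧ x 3 ≤ x 2
        · apply premE_rot _
          apply premE_rot _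
          apply premE_rot _
          apply min0
          · exact m3.1
          · exact m3.2.1
          · exact m3.2.2.1
          · exact m3.2.2.2
        · -- next
          by_cases m4 : x 4 ≤ x 0 ∧ x 4 ≤ x 1 ∧ x 4 ≤ x 2 ∧ x 4 ≤ x 3
          · apply premE_rot _
            apply premE_rot _
            apply premE_rot _
            apply premE_rot _
            apply min0
            · exact m4.1
            · exact m4.2.1
            · exact m4.2.2.1
            · exact m4.2.2.2
          · exfalso
            push_neg at m0 m1 m2 m3 m4
            omega


lemma noPmove (x y : Fin 5 → ℕ) (hx : P5 x) (hy : P5 y) (h : ecnMove 5 {1} 3 x y) : False := by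
  obtain ⟨hne, hle, s, hs, i, hwin⟩ := h
  rw [Set.mem_singleton_iff] at hs
  subst hs
  have hfix : ∀ j : Fin 5, ((j:ℕ) = (i+3) % 5 ∨ (j:ℕ) = (i+4) % 5) → y j = x j := by
    intro j hj
    by_contra hc
    obtain ⟨t, ht, he⟩ := hwin j hc
    omega
  have hd : y 0 ≠ x 0 ∨ y 1 ≠ x 1 ∨ y 2 ≠ x 2 ∨ y 3 ≠ x 3 ∨ y 4 ≠ x 4 := by
    by_contra hc
    push_neg at hc
    exact hne (funext (forall5 hc.1 hc.2.1 hc.2.2.1 hc.2.2.2.1 hc.2.2.2.2))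
  have l0 := hle 0; have l1 := hle 1; have l2 := hle 2; have l3 := hle 3; have l4 := hle 4
  unfold P5 Shape5 at hx hy
  have hi : i % 5 = 0 ∨ i % 5 = 1 ∨ i % 5 = 2 ∨ i % 5 = 3 ∨ i % 5 = 4 := by omega
  have c0 : ((0 : Fin 5) : ℕ) = 0 := rfl
  have c1 : ((1 : Fin 5) : ℕ) = 1 := rfl
  have c2 : ((2 : Fin 5) : ℕ) = 2 := rfl
  have c3 : ((3 : Fin 5) : ℕ) = 3 := rfl
  have c4 : ((4 : Fin 5) : ℕ) = 4 := rfl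
  rcases hi with hi|hi|hi|hi|hi
  · have e3 := hfix 3 (by omega); have e4 := hfix 4 (by omega); omega
  · have e3 := hfix 4 (by omega); have e4 := hfix 0 (by omega); omega
  · have e3 := hfix 0 (by omega); have e4 := hfix 1 (by omega); omega
  · have e3 := hfix 1 (by omega); have e4 := hfix 2 (by omega); omega
  · have e3 := hfix 2 (by omega); have e4 := hfix 3 (by omega); omega


lemma move_sum_lt (x y : Fin 5 → ℕ) (h : ecnMove 5 {1} 3 x y) :
    (∑ j, y j) < ∑ j, x j := by
  obtain ⟨hne, hle, _⟩ := h
  refine Finset.sum_lt_sum (fun i _ => hle i) ?_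
  by_contra hc
  push_neg at hc
  refine hne (funext fun j => ?_)
  exact le_antisymm (hle j) (hc j (Finset.mem_univ j))

lemma key : ∀ N : ℕ, ∀ x : Fin 5 → ℕ, (∑ j, x j) ≤ N →
    (IsP (ecnMove 5 {1} 3) x ↔ P5 x) := by
  intro N
  induction N with
  | zero =>
    intro x hx
    have hz : ∀ j : Fin 5, x j = 0 := by
      intro j
      have := Finset.sum_eq_zero_iff.mp (Nat.le_zero.mp hx) j (Finset.mem_univ j)
      exact this
    have hP5 : P5 x := Or.inl ⟨hz 0, by rw [hz 1, hz 2, hz 3], by rw [hz 2, hz 3, hz 4]⟩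
    refine iff_of_true ?_ hP5
    intro y hmv
    exfalso
    have := move_sum_lt x y hmv
    omega
  | succ N ih =>
    intro x hx
    constructor
    · intro hP
      by_contra hnP
      obtain ⟨y, hpre, hPy⟩ := exists_pre x
      have hmv := pre_to_move x y hnP hPy hpre
      have hN := hP y hmv
      rcases hN with ⟨_, z, hyz, hz⟩
      have s1 := move_sum_lt x y hmv
      have s2 := move_sum_lt y z hyz
      have hPz : P5 z := (ih z (by omega)).mp hz
      exact noPmove y z hPy hPz hyz
    · intro hPx y hmv
      have hny : ¬ P5 y := fun h => noPmove x y hPx h hmv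
      obtain ⟨z, hprez, hPz⟩ := exists_pre y
      have hmvz := pre_to_move y z hny hPz hprez
      have s1 := move_sum_lt x y hmv
      have s2 := move_sum_lt y z hmvz
      exact IsN.intro y z hmvz ((ih z (by omega)).mpr hPz)

lemma cyc_iff (n : Fin 5 → ℕ) :
    cyc 5 (fun x => x 0 = 0 ∧ x 1 = x 2 + x 3 ∧ x 2 + x 3 = x 4) n ↔ P5 n := by
  have c0 : ((0 : Fin 5) : ℕ) = 0 := rfl
  have c1 : ((1 : Fin 5) : ℕ) = 1 := rfl
  have c2 : ((2 : Fin 5) : ℕ) = 2 := rfl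
  have c3 : ((3 : Fin 5) : ℕ) = 3 := rfl
  have c4 : ((4 : Fin 5) : ℕ) = 4 := rfl
  constructor
  · rintro ⟨r, h | h⟩
    · obtain ⟨h1, h2, h3⟩ := h
      have f1 : n ⟨(((0:Fin 5):ℕ) + r) % 5, by omega⟩ = 0 := h1
      have f2 : n ⟨(((1:Fin 5):ℕ) + r) % 5, by omega⟩ = n ⟨(((2:Fin 5):ℕ) + r) % 5, by omega⟩ + n ⟨(((3:Fin 5):ℕ) + r) % 5, by omega⟩ := h2
      have f3 : n ⟨(((2:Fin 5):ℕ) + r) % 5, by omega⟩ + n ⟨(((3:Fin 5):ℕ) + r) % 5, by omega⟩ = n ⟨(((4:Fin 5):ℕ) + r) % 5, by omega⟩ := h3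
      have hr : r % 5 = 0 ∨ r % 5 = 1 ∨ r % 5 = 2 ∨ r % 5 = 3 ∨ r % 5 = 4 := by omega
      rcases hr with hr|hr|hr|hr|hr
      · have e0 : n ⟨(((0:Fin 5):ℕ) + r) % 5, by omega⟩ = n 0 :=
          val_congr n ((((0:Fin 5):ℕ) + r) % 5) 0 (by omega) (by omega) (by omega)
        have e1 : n ⟨(((1:Fin 5):ℕ) + r) % 5, by omega⟩ = n 1 :=
          val_congr n ((((1:Fin 5):ℕ) + r) % 5) 1 (by omega) (by omega) (by omega)
        have e2 : n ⟨(((2:Fin 5):ℕ) + r) % 5, by omega⟩ = n 2 :=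
          val_congr n ((((2:Fin 5):ℕ) + r) % 5) 2 (by omega) (by omega) (by omega)
        have e3 : n ⟨(((3:Fin 5):ℕ) + r) % 5, by omega⟩ = n 3 :=
          val_congr n ((((3:Fin 5):ℕ) + r) % 5) 3 (by omega) (by omega) (by omega)
        have e4 : n ⟨(((4:Fin 5):ℕ) + r) % 5, by omega⟩ = n 4 :=
          val_congr n ((((4:Fin 5):ℕ) + r) % 5) 4 (by omega) (by omega) (by omega)
        have hS : Shape5 (n 0) (n 1) (n 2) (n 3) (n 4) := by refine ⟨?_, ?_, ?_⟩ <;> omega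
        exact Or.inl hS
      · have e0 : n ⟨(((0:Fin 5):ℕ) + r) % 5, by omega⟩ = n 1 :=
          val_congr n ((((0:Fin 5):ℕ) + r) % 5) 1 (by omega) (by omega) (by omega)
        have e1 : n ⟨(((1:Fin 5):ℕ) + r) % 5, by omega⟩ = n 2 :=
          val_congr n ((((1:Fin 5):ℕ) + r) % 5) 2 (by omega) (by omega) (by omega)
        have e2 : n ⟨(((2:Fin 5):ℕ) + r) % 5, by omega⟩ = n 3 :=
          val_congr n ((((2:Fin 5):ℕ) + r) % 5) 3 (by omega) (by omega) (by omega)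
        have e3 : n ⟨(((3:Fin 5):ℕ) + r) % 5, by omega⟩ = n 4 :=
          val_congr n ((((3:Fin 5):ℕ) + r) % 5) 4 (by omega) (by omega) (by omega)
        have e4 : n ⟨(((4:Fin 5):ℕ) + r) % 5, by omega⟩ = n 0 :=
          val_congr n ((((4:Fin 5):ℕ) + r) % 5) 0 (by omega) (by omega) (by omega)
        have hS : Shape5 (n 1) (n 2) (n 3) (n 4) (n 0) := by refine ⟨?_, ?_, ?_⟩ <;> omega
        exact Or.inr (Or.inl hS)
      · have e0 : n ⟨(((0:Fin 5):ℕ) + r) % 5, by omega⟩ = n 2 :=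
          val_congr n ((((0:Fin 5):ℕ) + r) % 5) 2 (by omega) (by omega) (by omega)
        have e1 : n ⟨(((1:Fin 5):ℕ) + r) % 5, by omega⟩ = n 3 :=
          val_congr n ((((1:Fin 5):ℕ) + r) % 5) 3 (by omega) (by omega) (by omega)
        have e2 : n ⟨(((2:Fin 5):ℕ) + r) % 5, by omega⟩ = n 4 :=
          val_congr n ((((2:Fin 5):ℕ) + r) % 5) 4 (by omega) (by omega) (by omega)
        have e3 : n ⟨(((3:Fin 5):ℕ) + r) % 5, by omega⟩ = n 0 :=
          val_congr n ((((3:Fin 5):ℕ) + r) % 5) 0 (by omega) (by omega) (by omega)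
        have e4 : n ⟨(((4:Fin 5):ℕ) + r) % 5, by omega⟩ = n 1 :=
          val_congr n ((((4:Fin 5):ℕ) + r) % 5) 1 (by omega) (by omega) (by omega)
        have hS : Shape5 (n 2) (n 3) (n 4) (n 0) (n 1) := by refine ⟨?_, ?_, ?_⟩ <;> omega
        exact Or.inr (Or.inr (Or.inl hS))
      · have e0 : n ⟨(((0:Fin 5):ℕ) + r) % 5, by omega⟩ = n 3 :=
          val_congr n ((((0:Fin 5):ℕ) + r) % 5) 3 (by omega) (by omega) (by omega)
        have e1 : n ⟨(((1:Fin 5):ℕ) + r) % 5, by omega⟩ = n 4 :=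
          val_congr n ((((1:Fin 5):ℕ) + r) % 5) 4 (by omega) (by omega) (by omega)
        have e2 : n ⟨(((2:Fin 5):ℕ) + r) % 5, by omega⟩ = n 0 :=
          val_congr n ((((2:Fin 5):ℕ) + r) % 5) 0 (by omega) (by omega) (by omega)
        have e3 : n ⟨(((3:Fin 5):ℕ) + r) % 5, by omega⟩ = n 1 :=
          val_congr n ((((3:Fin 5):ℕ) + r) % 5) 1 (by omega) (by omega) (by omega)
        have e4 : n ⟨(((4:Fin 5):ℕ) + r) % 5, by omega⟩ = n 2 :=
          val_congr n ((((4:Fin 5):ℕ) + r) % 5) 2 (by omega) (by omega) (by omega)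
        have hS : Shape5 (n 3) (n 4) (n 0) (n 1) (n 2) := by refine ⟨?_, ?_, ?_⟩ <;> omega
        exact Or.inr (Or.inr (Or.inr (Or.inl hS)))
      · have e0 : n ⟨(((0:Fin 5):ℕ) + r) % 5, by omega⟩ = n 4 :=
          val_congr n ((((0:Fin 5):ℕ) + r) % 5) 4 (by omega) (by omega) (by omega)
        have e1 : n ⟨(((1:Fin 5):ℕ) + r) % 5, by omega⟩ = n 0 :=
          val_congr n ((((1:Fin 5):ℕ) + r) % 5) 0 (by omega) (by omega) (by omega)
        have e2 : n ⟨(((2:Fin 5):ℕ) + r) % 5, by omega⟩ = n 1 :=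
          val_congr n ((((2:Fin 5):ℕ) + r) % 5) 1 (by omega) (by omega) (by omega)
        have e3 : n ⟨(((3:Fin 5):ℕ) + r) % 5, by omega⟩ = n 2 :=
          val_congr n ((((3:Fin 5):ℕ) + r) % 5) 2 (by omega) (by omega) (by omega)
        have e4 : n ⟨(((4:Fin 5):ℕ) + r) % 5, by omega⟩ = n 3 :=
          val_congr n ((((4:Fin 5):ℕ) + r) % 5) 3 (by omega) (by omega) (by omega)
        have hS : Shape5 (n 4) (n 0) (n 1) (n 2) (n 3) := by refine ⟨?_, ?_, ?_⟩ <;> omega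
        exact Or.inr (Or.inr (Or.inr (Or.inr hS)))
    · obtain ⟨h1, h2, h3⟩ := h
      have f1 : n ⟨(r + (5 - ((0:Fin 5):ℕ))) % 5, by omega⟩ = 0 := h1
      have f2 : n ⟨(r + (5 - ((1:Fin 5):ℕ))) % 5, by omega⟩ = n ⟨(r + (5 - ((2:Fin 5):ℕ))) % 5, by omega⟩ + n ⟨(r + (5 - ((3:Fin 5):ℕ))) % 5, by omega⟩ := h2
      have f3 : n ⟨(r + (5 - ((2:Fin 5):ℕ))) % 5, by omega⟩ + n ⟨(r + (5 - ((3:Fin 5):ℕ))) % 5, by omega⟩ = n ⟨(r + (5 - ((4:Fin 5):ℕ))) % 5, by omega⟩ := h3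
      have hr : r % 5 = 0 ∨ r % 5 = 1 ∨ r % 5 = 2 ∨ r % 5 = 3 ∨ r % 5 = 4 := by omega
      rcases hr with hr|hr|hr|hr|hr
      · have e0 : n ⟨(r + (5 - ((0:Fin 5):ℕ))) % 5, by omega⟩ = n 0 :=
          val_congr n ((r + (5 - ((0:Fin 5):ℕ))) % 5) 0 (by omega) (by omega) (by omega)
        have e1 : n ⟨(r + (5 - ((1:Fin 5):ℕ))) % 5, by omega⟩ = n 4 :=
          val_congr n ((r + (5 - ((1:Fin 5):ℕ))) % 5) 4 (by omega) (by omega) (by omega)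
        have e2 : n ⟨(r + (5 - ((2:Fin 5):ℕ))) % 5, by omega⟩ = n 3 :=
          val_congr n ((r + (5 - ((2:Fin 5):ℕ))) % 5) 3 (by omega) (by omega) (by omega)
        have e3 : n ⟨(r + (5 - ((3:Fin 5):ℕ))) % 5, by omega⟩ = n 2 :=
          val_congr n ((r + (5 - ((3:Fin 5):ℕ))) % 5) 2 (by omega) (by omega) (by omega)
        have e4 : n ⟨(r + (5 - ((4:Fin 5):ℕ))) % 5, by omega⟩ = n 1 :=
          val_congr n ((r + (5 - ((4:Fin 5):ℕ))) % 5) 1 (by omega) (by omega) (by omega)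
        have hS : Shape5 (n 0) (n 1) (n 2) (n 3) (n 4) := by refine ⟨?_, ?_, ?_⟩ <;> omega
        exact Or.inl hS
      · have e0 : n ⟨(r + (5 - ((0:Fin 5):ℕ))) % 5, by omega⟩ = n 1 :=
          val_congr n ((r + (5 - ((0:Fin 5):ℕ))) % 5) 1 (by omega) (by omega) (by omega)
        have e1 : n ⟨(r + (5 - ((1:Fin 5):ℕ))) % 5, by omega⟩ = n 0 :=
          val_congr n ((r + (5 - ((1:Fin 5):ℕ))) % 5) 0 (by omega) (by omega) (by omega)
        have e2 : n ⟨(r + (5 - ((2:Fin 5):ℕ))) % 5, by omega⟩ = n 4 :=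
          val_congr n ((r + (5 - ((2:Fin 5):ℕ))) % 5) 4 (by omega) (by omega) (by omega)
        have e3 : n ⟨(r + (5 - ((3:Fin 5):ℕ))) % 5, by omega⟩ = n 3 :=
          val_congr n ((r + (5 - ((3:Fin 5):ℕ))) % 5) 3 (by omega) (by omega) (by omega)
        have e4 : n ⟨(r + (5 - ((4:Fin 5):ℕ))) % 5, by omega⟩ = n 2 :=
          val_congr n ((r + (5 - ((4:Fin 5):ℕ))) % 5) 2 (by omega) (by omega) (by omega)
        have hS : Shape5 (n 1) (n 2) (n 3) (n 4) (n 0) := by refine ⟨?_, ?_, ?_⟩ <;> omega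
        exact Or.inr (Or.inl hS)
      · have e0 : n ⟨(r + (5 - ((0:Fin 5):ℕ))) % 5, by omega⟩ = n 2 :=
          val_congr n ((r + (5 - ((0:Fin 5):ℕ))) % 5) 2 (by omega) (by omega) (by omega)
        have e1 : n ⟨(r + (5 - ((1:Fin 5):ℕ))) % 5, by omega⟩ = n 1 :=
          val_congr n ((r + (5 - ((1:Fin 5):ℕ))) % 5) 1 (by omega) (by omega) (by omega)
        have e2 : n ⟨(r + (5 - ((2:Fin 5):ℕ))) % 5, by omega⟩ = n 0 :=
          val_congr n ((r + (5 - ((2:Fin 5):ℕ))) % 5) 0 (by omega) (by omega) (by omega)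
        have e3 : n ⟨(r + (5 - ((3:Fin 5):ℕ))) % 5, by omega⟩ = n 4 :=
          val_congr n ((r + (5 - ((3:Fin 5):ℕ))) % 5) 4 (by omega) (by omega) (by omega)
        have e4 : n ⟨(r + (5 - ((4:Fin 5):ℕ))) % 5, by omega⟩ = n 3 :=
          val_congr n ((r + (5 - ((4:Fin 5):ℕ))) % 5) 3 (by omega) (by omega) (by omega)
        have hS : Shape5 (n 2) (n 3) (n 4) (n 0) (n 1) := by refine ⟨?_, ?_, ?_⟩ <;> omega
        exact Or.inr (Or.inr (Or.inl hS))
      · have e0 : n ⟨(r + (5 - ((0:Fin 5):ℕ))) % 5, by omega⟩ = n 3 :=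
          val_congr n ((r + (5 - ((0:Fin 5):ℕ))) % 5) 3 (by omega) (by omega) (by omega)
        have e1 : n ⟨(r + (5 - ((1:Fin 5):ℕ))) % 5, by omega⟩ = n 2 :=
          val_congr n ((r + (5 - ((1:Fin 5):ℕ))) % 5) 2 (by omega) (by omega) (by omega)
        have e2 : n ⟨(r + (5 - ((2:Fin 5):ℕ))) % 5, by omega⟩ = n 1 :=
          val_congr n ((r + (5 - ((2:Fin 5):ℕ))) % 5) 1 (by omega) (by omega) (by omega)
        have e3 : n ⟨(r + (5 - ((3:Fin 5):ℕ))) % 5, by omega⟩ = n 0 :=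
          val_congr n ((r + (5 - ((3:Fin 5):ℕ))) % 5) 0 (by omega) (by omega) (by omega)
        have e4 : n ⟨(r + (5 - ((4:Fin 5):ℕ))) % 5, by omega⟩ = n 4 :=
          val_congr n ((r + (5 - ((4:Fin 5):ℕ))) % 5) 4 (by omega) (by omega) (by omega)
        have hS : Shape5 (n 3) (n 4) (n 0) (n 1) (n 2) := by refine ⟨?_, ?_, ?_⟩ <;> omega
        exact Or.inr (Or.inr (Or.inr (Or.inl hS)))
      · have e0 : n ⟨(r + (5 - ((0:Fin 5):ℕ))) % 5, by omega⟩ = n 4 :=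
          val_congr n ((r + (5 - ((0:Fin 5):ℕ))) % 5) 4 (by omega) (by omega) (by omega)
        have e1 : n ⟨(r + (5 - ((1:Fin 5):ℕ))) % 5, by omega⟩ = n 3 :=
          val_congr n ((r + (5 - ((1:Fin 5):ℕ))) % 5) 3 (by omega) (by omega) (by omega)
        have e2 : n ⟨(r + (5 - ((2:Fin 5):ℕ))) % 5, by omega⟩ = n 2 :=
          val_congr n ((r + (5 - ((2:Fin 5):ℕ))) % 5) 2 (by omega) (by omega) (by omega)
        have e3 : n ⟨(r + (5 - ((3:Fin 5):ℕ))) % 5, by omega⟩ = n 1 :=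
          val_congr n ((r + (5 - ((3:Fin 5):ℕ))) % 5) 1 (by omega) (by omega) (by omega)
        have e4 : n ⟨(r + (5 - ((4:Fin 5):ℕ))) % 5, by omega⟩ = n 0 :=
          val_congr n ((r + (5 - ((4:Fin 5):ℕ))) % 5) 0 (by omega) (by omega) (by omega)
        have hS : Shape5 (n 4) (n 0) (n 1) (n 2) (n 3) := by refine ⟨?_, ?_, ?_⟩ <;> omega
        exact Or.inr (Or.inr (Or.inr (Or.inr hS)))
  · rintro (h|h|h|h|h)
    · exact ⟨0, Or.inl ⟨h.1, h.2.1, h.2.2⟩⟩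
    · exact ⟨1, Or.inl ⟨h.1, h.2.1, h.2.2⟩⟩
    · exact ⟨2, Or.inl ⟨h.1, h.2.1, h.2.2⟩⟩
    · exact ⟨3, Or.inl ⟨h.1, h.2.1, h.2.2⟩⟩
    · exact ⟨4, Or.inl ⟨h.1, h.2.1, h.2.2⟩⟩

theorem cn53_P_iff (n : Fin 5 → ℕ) :
    IsP (ecnMove 5 {1} 3) n ↔
      cyc 5 (fun x => x 0 = 0 ∧ x 1 = x 2 + x 3 ∧ x 2 + x 3 = x 4) n := by
  rw [cyc_iff n]
  exact key (∑ j, n j) n le_rfl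
end

section
/- A position M = (n_0, n_1, n_2, n_3, n_4, n_5) in extended circular nim ECN(6_{1,2}, 3) is a P-position if and only if n_0 = n_3, n_1 = n_4, and n_2 = n_5. -/
def bal (n : Fin 6 → ℕ) : Prop := n 0 = n 3 ∧ n 1 = n 4 ∧ n 2 = n 5

lemma ecn_sum_lt {S : Set ℕ} {k : ℕ} {x y : Fin 6 → ℕ} (h : ecnMove 6 S k x y) :
    ∑ j, y j < ∑ j, x j := by
  obtain ⟨hne, hle, -⟩ := h
  obtain ⟨j, hj⟩ := Function.ne_iff.mp hne
  exact Finset.sum_lt_sum (fun k _ => hle k)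
    ⟨j, Finset.mem_univ j, lt_of_le_of_ne (hle j) hj⟩

lemma balA {x y : Fin 6 → ℕ} (hx : bal x) (hm : ecnMove 6 {1, 2} 3 x y)
    (hy : bal y) : False := by
  obtain ⟨hne, hle, s, hs, i, hprog⟩ := hm
  obtain ⟨j, hj⟩ := Function.ne_iff.mp hne
  obtain ⟨hx0, hx1, hx2⟩ := hx
  obtain ⟨hy0, hy1, hy2⟩ := hy
  have pair : ∃ a b : Fin 6, y a ≠ x a ∧ y b ≠ x b ∧ (b : ℕ) = ((a : ℕ) + 3) % 6 := by
    fin_cases j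
    · exact ⟨0, 3, hj, by intro h; exact hj (show y 0 = x 0 by omega), rfl⟩
    · exact ⟨1, 4, hj, by intro h; exact hj (show y 1 = x 1 by omega), rfl⟩
    · exact ⟨2, 5, hj, by intro h; exact hj (show y 2 = x 2 by omega), rfl⟩
    · exact ⟨3, 0, hj, by intro h; exact hj (show y 3 = x 3 by omega), rfl⟩
    · exact ⟨4, 1, hj, by intro h; exact hj (show y 4 = x 4 by omega), rfl⟩
    · exact ⟨5, 2, hj, by intro h; exact hj (show y 5 = x 5 by omega), rfl⟩
  obtain ⟨a, b, ha, hb, hab⟩ := pair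
  obtain ⟨t, ht, hta⟩ := hprog a ha
  obtain ⟨t', ht', htb⟩ := hprog b hb
  have hs' : s = 1 ∨ s = 2 := by simpa using hs
  rcases hs' with rfl | rfl <;> omega

lemma balB {y : Fin 6 → ℕ} (hy : ¬ bal y) :
    ∃ z, ecnMove 6 {1, 2} 3 y z ∧ bal z := by
  refine ⟨![min (y 0) (y 3), min (y 1) (y 4), min (y 2) (y 5),
            min (y 3) (y 0), min (y 4) (y 1), min (y 5) (y 2)],
    ⟨?_, ?_, ?_⟩, min_comm (y 0) (y 3), min_comm (y 1) (y 4), min_comm (y 2) (y 5)⟩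
  · intro h
    apply hy
    have h0 : min (y 0) (y 3) = y 0 := congrFun h 0
    have h1 : min (y 1) (y 4) = y 1 := congrFun h 1
    have h2 : min (y 2) (y 5) = y 2 := congrFun h 2
    have h3 : min (y 3) (y 0) = y 3 := congrFun h 3
    have h4 : min (y 4) (y 1) = y 4 := congrFun h 4
    have h5 : min (y 5) (y 2) = y 5 := congrFun h 5
    exact ⟨by omega, by omega, by omega⟩
  · intro j
    fin_cases j <;> exact min_le_left _ _
  · by_cases h0 : y 3 < y 0 <;> by_cases h1 : y 4 < y 1 <;> by_cases h2 : y 5 < y 2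
    · refine ⟨1, by norm_num, 0, ?_⟩
      intro j hj
      fin_cases j <;>
        first
        | exact ⟨0, by norm_num, rfl⟩
        | exact ⟨1, by norm_num, rfl⟩
        | exact ⟨2, by norm_num, rfl⟩
        | exact absurd (min_eq_left (by omega)) hj
    · refine ⟨1, by norm_num, 5, ?_⟩
      intro j hj
      fin_cases j <;>
        first
        | exact ⟨0, by norm_num, rfl⟩
        | exact ⟨1, by norm_num, rfl⟩
        | exact ⟨2, by norm_num, rfl⟩
        | exact absurd (min_eq_left (by omega)) hj
    · refine ⟨2, by norm_num, 0, ?_⟩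
      intro j hj
      fin_cases j <;>
        first
        | exact ⟨0, by norm_num, rfl⟩
        | exact ⟨1, by norm_num, rfl⟩
        | exact ⟨2, by norm_num, rfl⟩
        | exact absurd (min_eq_left (by omega)) hj
    · refine ⟨1, by norm_num, 4, ?_⟩
      intro j hj
      fin_cases j <;>
        first
        | exact ⟨0, by norm_num, rfl⟩
        | exact ⟨1, by norm_num, rfl⟩
        | exact ⟨2, by norm_num, rfl⟩
        | exact absurd (min_eq_left (by omega)) hj
    · refine ⟨1, by norm_num, 1, ?_⟩
      intro j hj
      fin_cases j <;>
        first
        | exact ⟨0, by norm_num, rfl⟩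
        | exact ⟨1, by norm_num, rfl⟩
        | exact ⟨2, by norm_num, rfl⟩
        | exact absurd (min_eq_left (by omega)) hj
    · refine ⟨2, by norm_num, 1, ?_⟩
      intro j hj
      fin_cases j <;>
        first
        | exact ⟨0, by norm_num, rfl⟩
        | exact ⟨1, by norm_num, rfl⟩
        | exact ⟨2, by norm_num, rfl⟩
        | exact absurd (min_eq_left (by omega)) hj
    · refine ⟨1, by norm_num, 2, ?_⟩
      intro j hj
      fin_cases j <;>
        first
        | exact ⟨0, by norm_num, rfl⟩
        | exact ⟨1, by norm_num, rfl⟩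
        | exact ⟨2, by norm_num, rfl⟩
        | exact absurd (min_eq_left (by omega)) hj
    · refine ⟨1, by norm_num, 3, ?_⟩
      intro j hj
      fin_cases j <;>
        first
        | exact ⟨0, by norm_num, rfl⟩
        | exact ⟨1, by norm_num, rfl⟩
        | exact ⟨2, by norm_num, rfl⟩
        | exact absurd (min_eq_left (by omega)) hj

lemma bal_isP : ∀ N, ∀ z : Fin 6 → ℕ, (∑ j, z j) < N → bal z →
    IsP (ecnMove 6 {1, 2} 3) z := by
  intro N
  induction N with
  | zero => intro z hz; exact absurd hz (Nat.not_lt_zero _)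
  | succ N ih =>
    intro z hz hbal w hw
    have hwb : ¬ bal w := fun hb => balA hbal hw hb
    obtain ⟨u, hu, hub⟩ := balB hwb
    refine IsN.intro w u hu (ih u ?_ hub)
    have := ecn_sum_lt hw; have := ecn_sum_lt hu; omega

lemma bal_not_isN : ∀ N, ∀ z : Fin 6 → ℕ, (∑ j, z j) < N → bal z →
    ¬ IsN (ecnMove 6 {1, 2} 3) z := by
  intro N
  induction N with
  | zero => intro z hz; exact absurd hz (Nat.not_lt_zero _)
  | succ N ih =>
    intro z hz hbal h
    obtain ⟨x, w, hw, hwP⟩ := h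
    have hwb : ¬ bal w := fun hb => balA hbal hw hb
    obtain ⟨u, hu, hub⟩ := balB hwb
    refine ih u ?_ hub (hwP u hu)
    have := ecn_sum_lt hw; have := ecn_sum_lt hu; omega

theorem ecn6_12_3_P_iff (n : Fin 6 → ℕ) :
    IsP (ecnMove 6 {1, 2} 3) n ↔ n 0 = n 3 ∧ n 1 = n 4 ∧ n 2 = n 5 := by
  constructor
  · intro hP
    by_contra hb
    obtain ⟨z, hz, hzb⟩ := balB hb
    exact bal_not_isN (∑ j, z j + 1) z (Nat.lt_succ_self _) hzb (hP z hz)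
  · intro hb
    exact bal_isP (∑ j, n j + 1) n (Nat.lt_succ_self _) hb
end

section
/- A position M = (n_0, n_1, n_2, n_3, n_4, n_5) in extended circular nim ECN(6_{2,3}, 3) is a P-position if and only if some cyclic rotation or reflection of M lies in the set P = {(n_0,...,n_5) : n_0 + n_2 + n_4 = n_1 + n_3 + n_5, n_0 ⊕ n_1 ⊕ n_2 = 0, n_0 ≤ n_3, n_1 ≤ n_4, n_2 ≤ n_5}. -/
/-!
Call a position safe if its even and odd piles have equal sums and the minima of the three
opposite pairs `{i, i + 3}` have nim-sum `0`; the safe positions are exactly the rotations of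
the positions in `P` (rotate the smaller piles of the pairs to the front). Moves commute with
rotations, so up to rotation a move lowers piles `{0, 2, 4}` or the pair `{0, 3}`. From a safe
position the first kind breaks the balance, and the second, if it keeps the balance, lowers both
piles of the pair equally and so changes exactly one minimum. From an unsafe position, rotate so
that the even piles weigh at least as much as the odd ones and `min (x 0) (x 3)` is at least the
nim-sum `t` of the other two minima; then a move of one of the two kinds reaches a safe position
in which the pair `{0, 3}` has minimum `t`.
-/

theorem IsN.not_isP {α : Type*} {move : α → α → Prop} {x : α} (h : IsN move x) :
    ¬IsP move x := by
  induction h with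
  | intro x y hxy _ ih =>
    intro hP
    obtain ⟨_, z, hyz, hz⟩ := hP y hxy
    exact ih z hyz hz

theorem isP_iff_of_kernel {α : Type*} {move : α → α → Prop} (hwf : WellFounded (flip move))
    {C : α → Prop} (hstable : ∀ x y, C x → move x y → ¬C y)
    (habsorb : ∀ x, ¬C x → ∃ y, move x y ∧ C y) (x : α) : IsP move x ↔ C x := by
  have key : (C x → IsP move x) ∧ (¬C x → IsN move x) := by
    induction x using hwf.induction with
    | _ x ih =>
      refine ⟨fun hx y hxy => (ih y hxy).2 (hstable x y hx hxy), fun hx => ?_⟩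
      obtain ⟨y, hxy, hy⟩ := habsorb x hx
      exact IsN.intro x y hxy ((ih y hxy).1 hy)
  exact ⟨fun hP => by_contra fun hx => (key.2 hx).not_isP hP, key.1⟩

theorem Nat.xor_le_trichotomy (a b c : ℕ) : b ^^^ c ≤ a ∨ c ^^^ a ≤ b ∨ a ^^^ b ≤ c := by
  by_cases h : a ^^^ b ^^^ c = 0
  · rw [Nat.xor_assoc] at h
    exact Or.inl (Nat.eq_of_xor_eq_zero h).symm.le
  · rcases Nat.xor_trichotomy h with h | h | h
    exacts [Or.inl h.le, Or.inr (Or.inl h.le), Or.inr (Or.inr h.le)]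

section Rotation

open Fin.NatCast

variable {m : ℕ} {α : Type*}

def rotate (r : Fin m) (x : Fin m → α) : Fin m → α := fun j => x (j + r)

def reflect (x : Fin m → α) : Fin m → α := fun j => x (-j)

@[simp] theorem rotate_apply (r : Fin m) (x : Fin m → α) (j : Fin m) :
    rotate r x j = x (j + r) := rfl

@[simp] theorem rotate_zero [NeZero m] (x : Fin m → α) : rotate 0 x = x := by
  funext j; simp

theorem rotate_rotate (r s : Fin m) (x : Fin m → α) :
    rotate r (rotate s x) = rotate (r + s) x := by
  funext j; simp [add_assoc]

theorem rotate_lt_rotate_iff [NeZero m] [Preorder α] (r : Fin m) {x y : Fin m → α} :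
    rotate r y < rotate r x ↔ y < x := by
  simp only [Pi.lt_def, Pi.le_def, rotate_apply]
  exact and_congr ⟨fun h i => by simpa using h (i - r), fun h i => h (i + r)⟩
    ⟨fun ⟨i, h⟩ => ⟨i + r, h⟩, fun ⟨i, h⟩ => ⟨i - r, by simpa using h⟩⟩

theorem cyc_iff_exists_rotate [NeZero m] (Q : (Fin m → ℕ) → Prop) (n : Fin m → ℕ) :
    cyc m Q n ↔ ∃ r : Fin m, Q (rotate r n) ∨ Q (reflect (rotate r n)) := by
  have hrot : ∀ r : ℕ, (fun j : Fin m => n ⟨(j.1 + r) % m, Nat.mod_lt _ (Nat.lt_of_le_of_lt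
      (Nat.zero_le _) j.isLt)⟩) = rotate (r : Fin m) n := by
    intro r; funext j; congr 1; ext; simp [Fin.val_add]
  have hrefl : ∀ r : ℕ, (fun j : Fin m => n ⟨(r + (m - j.1)) % m, Nat.mod_lt _
      (Nat.lt_of_le_of_lt (Nat.zero_le _) j.isLt)⟩) = reflect (rotate (r : Fin m) n) := by
    intro r; funext j; congr 1; ext; simp [Fin.val_add, Fin.val_neg', Nat.add_comm]
  simp only [cyc, hrot, hrefl]
  exact ⟨fun ⟨r, h⟩ => ⟨r, h⟩, fun ⟨r, h⟩ => ⟨r.val, by rwa [Fin.cast_val_eq_self]⟩⟩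

end Rotation

section Move

open Fin.NatCast

variable {m : ℕ} {S : Set ℕ} {k : ℕ}

theorem Fin.val_eq_mod_iff [NeZero m] {a : Fin m} {n : ℕ} : (a : ℕ) = n % m ↔ a = n := by
  rw [Fin.ext_iff, Fin.val_natCast]

theorem ecnMove.lt {x y : Fin m → ℕ} (h : ecnMove m S k x y) : y < x :=
  lt_of_le_of_ne h.2.1 h.1

theorem ecnMove_wellFounded : WellFounded (flip (ecnMove m S k)) :=
  Subrelation.wf (fun h => ecnMove.lt h) wellFounded_lt

theorem ecnMove_iff_exists_rotate [NeZero m] {x y : Fin m → ℕ} :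
    ecnMove m S k x y ↔ y < x ∧ ∃ s ∈ S, ∃ r : Fin m,
      ∀ j, rotate r y j ≠ rotate r x j → ∃ t < k, (j : ℕ) = t * s % m := by
  simp only [ecnMove, Fin.val_eq_mod_iff, rotate_apply]
  constructor
  · rintro ⟨hne, hle, s, hs, i, hi⟩
    refine ⟨lt_of_le_of_ne hle hne, s, hs, i, fun j hj => ?_⟩
    obtain ⟨t, ht, hjt⟩ := hi _ hj
    refine ⟨t, ht, ?_⟩
    push_cast at hjt
    exact add_right_cancel (hjt.trans (add_comm _ _))
  · rintro ⟨hlt, s, hs, r, hr⟩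
    refine ⟨hlt.ne, hlt.le, s, hs, r.val, fun j hj => ?_⟩
    obtain ⟨t, ht, hjt⟩ := hr (j - r) (by simpa using hj)
    refine ⟨t, ht, ?_⟩
    push_cast
    rw [← hjt, add_sub_cancel]

end Move

namespace ECN6

open Fin.NatCast

def Safe (x : Fin 6 → ℕ) : Prop :=
  x 0 + x 2 + x 4 = x 1 + x 3 + x 5 ∧ min (x 0) (x 3) ^^^ min (x 1) (x 4) ^^^ min (x 2) (x 5) = 0

def pSet (x : Fin 6 → ℕ) : Prop :=
  x 0 + x 2 + x 4 = x 1 + x 3 + x 5 ∧ x 0 ^^^ x 1 ^^^ x 2 = 0 ∧ x 0 ≤ x 3 ∧ x 1 ≤ x 4 ∧ x 2 ≤ x 5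

def MoveAtZero (x y : Fin 6 → ℕ) : Prop :=
  y < x ∧ ((y 1 = x 1 ∧ y 3 = x 3 ∧ y 5 = x 5) ∨ (y 1 = x 1 ∧ y 2 = x 2 ∧ y 4 = x 4 ∧ y 5 = x 5))

theorem safe_rotate_one (x : Fin 6 → ℕ) : Safe (rotate 1 x) ↔ Safe x := by
  have hxor : min (x 1) (x 4) ^^^ min (x 2) (x 5) ^^^ min (x 3) (x 0) =
      min (x 0) (x 3) ^^^ min (x 1) (x 4) ^^^ min (x 2) (x 5) := by
    rw [min_comm (x 3)]; simp only [Nat.xor_assoc, Nat.xor_comm]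
  simp only [Safe, rotate_apply, Fin.reduceAdd, hxor]
  exact and_congr_left' ⟨fun h => by omega, fun h => by omega⟩

theorem safe_rotate (r : Fin 6) (x : Fin 6 → ℕ) : Safe (rotate r x) ↔ Safe x := by
  obtain ⟨n, rfl⟩ : ∃ n : ℕ, (n : Fin 6) = r := ⟨r.val, Fin.cast_val_eq_self r⟩
  induction n with
  | zero => simp
  | succ n ih => rw [Nat.cast_succ, add_comm, ← rotate_rotate, safe_rotate_one, ih]

theorem safe_reflect (x : Fin 6 → ℕ) : Safe (reflect x) ↔ Safe x := by
  have hxor : min (x 0) (x 3) ^^^ min (x 5) (x 2) ^^^ min (x 4) (x 1) =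
      min (x 0) (x 3) ^^^ min (x 1) (x 4) ^^^ min (x 2) (x 5) := by
    rw [min_comm (x 5), min_comm (x 4)]
    simp only [Nat.xor_assoc, Nat.xor_comm, Nat.xor_left_comm]
  change (x 0 + x 4 + x 2 = x 5 + x 3 + x 1 ∧
    min (x 0) (x 3) ^^^ min (x 5) (x 2) ^^^ min (x 4) (x 1) = 0) ↔ Safe x
  rw [hxor]
  exact and_congr_left' ⟨fun h => by omega, fun h => by omega⟩

theorem pSet_iff {x : Fin 6 → ℕ} : pSet x ↔ Safe x ∧ x 0 ≤ x 3 ∧ x 1 ≤ x 4 ∧ x 2 ≤ x 5 := by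
  constructor
  · rintro ⟨hbal, hxor, h0, h1, h2⟩
    exact ⟨⟨hbal, by rwa [min_eq_left h0, min_eq_left h1, min_eq_left h2]⟩, h0, h1, h2⟩
  · rintro ⟨⟨hbal, hxor⟩, h0, h1, h2⟩
    rw [min_eq_left h0, min_eq_left h1, min_eq_left h2] at hxor
    exact ⟨hbal, hxor, h0, h1, h2⟩

/-- Of the eight ways to pick the smaller pile of each opposite pair, all but `{0, 2, 4}` and
`{1, 3, 5}` are three consecutive piles, and balance forces those two to be ties. -/
theorem exists_rotate_le_opposite {x : Fin 6 → ℕ} (h : x 0 + x 2 + x 4 = x 1 + x 3 + x 5) :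
    ∃ r, rotate r x 0 ≤ rotate r x 3 ∧ rotate r x 1 ≤ rotate r x 4 ∧
      rotate r x 2 ≤ rotate r x 5 := by
  by_contra! hc
  have h0 := hc 0; have h1 := hc 1; have h2 := hc 2
  have h3 := hc 3; have h4 := hc 4; have h5 := hc 5
  simp only [rotate_apply, Fin.reduceAdd, add_zero] at h0 h1 h2 h3 h4 h5
  omega

theorem safe_iff_cyc (n : Fin 6 → ℕ) : Safe n ↔ cyc 6 pSet n := by
  rw [cyc_iff_exists_rotate]
  constructor
  · intro h
    obtain ⟨r, hr⟩ := exists_rotate_le_opposite h.1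
    exact ⟨r, Or.inl (pSet_iff.2 ⟨(safe_rotate r n).2 h, hr⟩)⟩
  · rintro ⟨r, h | h⟩
    · exact (safe_rotate r n).1 (pSet_iff.1 h).1
    · exact (safe_rotate r n).1 ((safe_reflect _).1 (pSet_iff.1 h).1)

theorem support_two {x y : Fin 6 → ℕ} :
    (∀ j, y j ≠ x j → ∃ t < 3, (j : ℕ) = t * 2 % 6) ↔ y 1 = x 1 ∧ y 3 = x 3 ∧ y 5 = x 5 := by
  constructor
  · intro h
    refine ⟨?_, ?_, ?_⟩ <;> by_contra hne <;> obtain ⟨t, ht, hj⟩ := h _ hne <;> omega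
  · rintro ⟨h1, h3, h5⟩ j hj
    fin_cases j <;> first | decide | contradiction

theorem support_three {x y : Fin 6 → ℕ} :
    (∀ j, y j ≠ x j → ∃ t < 3, (j : ℕ) = t * 3 % 6) ↔
      y 1 = x 1 ∧ y 2 = x 2 ∧ y 4 = x 4 ∧ y 5 = x 5 := by
  constructor
  · intro h
    refine ⟨?_, ?_, ?_, ?_⟩ <;> by_contra hne <;> obtain ⟨t, ht, hj⟩ := h _ hne <;> omega
  · rintro ⟨h1, h2, h4, h5⟩ j hj
    fin_cases j <;> first | decide | contradiction

theorem ecnMove_iff {x y : Fin 6 → ℕ} :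
    ecnMove 6 {2, 3} 3 x y ↔ ∃ r, MoveAtZero (rotate r x) (rotate r y) := by
  simp only [ecnMove_iff_exists_rotate, MoveAtZero, rotate_lt_rotate_iff, Set.mem_insert_iff,
    Set.mem_singleton_iff, exists_eq_or_imp, exists_eq_left, support_two, support_three]
  rw [← exists_or, exists_and_left]

theorem not_safe_of_moveAtZero {x y : Fin 6 → ℕ} (hx : Safe x) (h : MoveAtZero x y) :
    ¬Safe y := by
  rintro ⟨hbal, hxor⟩
  obtain ⟨hlt, hsupp⟩ := h
  obtain ⟨hle, i, hi⟩ := Pi.lt_def.1 hlt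
  have hsum : ∑ j, y j < ∑ j, x j :=
    Finset.sum_lt_sum (fun j _ => hle j) ⟨i, Finset.mem_univ i, hi⟩
  simp only [Fin.sum_univ_six] at hsum
  have hbalx := hx.1
  rcases hsupp with ⟨h1, h3, h5⟩ | ⟨h1, h2, h4, h5⟩
  · omega
  · rw [h1, h2, h4, h5] at hxor
    have := Nat.xor_left_inj.1 (Nat.xor_left_inj.1 (hxor.trans hx.2.symm))
    omega

/-- With `D` the excess of the even piles: if pile `0` can absorb `D`, lower the pair `{0, 3}`
so that its difference drops by `D` and its minimum becomes `t`; otherwise set pile `0` to `t`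
and take the rest of `D` from piles `2` and `4` without lowering their pair minima, which is
possible because `t ≤ x 3`. -/
theorem exists_moveAtZero_safe {x : Fin 6 → ℕ} (hx : ¬Safe x)
    (hsum : x 1 + x 3 + x 5 ≤ x 0 + x 2 + x 4)
    (ht : min (x 1) (x 4) ^^^ min (x 2) (x 5) ≤ min (x 0) (x 3)) :
    ∃ y, MoveAtZero x y ∧ Safe y := by
  obtain ⟨D, hD⟩ := Nat.exists_eq_add_of_le hsum
  set t := min (x 1) (x 4) ^^^ min (x 2) (x 5) with ht_def
  suffices ∃ y : Fin 6 → ℕ, y ≤ x ∧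
      ((y 1 = x 1 ∧ y 3 = x 3 ∧ y 5 = x 5) ∨ (y 1 = x 1 ∧ y 2 = x 2 ∧ y 4 = x 4 ∧ y 5 = x 5)) ∧
      y 0 + y 2 + y 4 = y 1 + y 3 + y 5 ∧ min (y 0) (y 3) = t ∧
      min (y 1) (y 4) = min (x 1) (x 4) ∧ min (y 2) (y 5) = min (x 2) (x 5) by
    obtain ⟨y, hle, hsupp, hbaly, h0, h1, h2⟩ := this
    have hy : Safe y := ⟨hbaly, by rw [h0, h1, h2, ht_def, Nat.xor_assoc, Nat.xor_self]⟩
    exact ⟨y, ⟨lt_of_le_of_ne hle fun h => hx (h ▸ hy), hsupp⟩, hy⟩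
  by_cases hA : t + D ≤ x 0
  · refine ⟨![t + (x 0 - D - x 3), x 1, x 2, t + (x 3 - (x 0 - D)), x 4, x 5], ?_,
      Or.inr ⟨rfl, rfl, rfl, rfl⟩, ?_⟩
    · intro j
      fin_cases j <;> simp only [Fin.zero_eta, Fin.mk_one, Fin.reduceFinMk, Matrix.cons_val] <;>
        omega
    · simp only [Matrix.cons_val, and_true]
      omega
  · refine ⟨![t, x 1, x 2 - min (D - (x 0 - t)) (x 2 - min (x 2) (x 5)), x 3,
      x 4 - (D - (x 0 - t) - min (D - (x 0 - t)) (x 2 - min (x 2) (x 5))), x 5], ?_,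
      Or.inl ⟨rfl, rfl, rfl⟩, ?_⟩
    · intro j
      fin_cases j <;> simp only [Fin.zero_eta, Fin.mk_one, Fin.reduceFinMk, Matrix.cons_val] <;>
        omega
    · simp only [Matrix.cons_val]
      omega

theorem exists_rotate_normal (x : Fin 6 → ℕ) : ∃ r, let z := rotate r x;
    z 1 + z 3 + z 5 ≤ z 0 + z 2 + z 4 ∧ min (z 1) (z 4) ^^^ min (z 2) (z 5) ≤ min (z 0) (z 3) := by
  rcases Nat.xor_le_trichotomy (min (x 0) (x 3)) (min (x 1) (x 4)) (min (x 2) (x 5))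
    with hk | hk | hk <;>
  rcases le_total (x 1 + x 3 + x 5) (x 0 + x 2 + x 4) with hb | hb
  · exact ⟨0, hb, hk⟩
  · exact ⟨3, by simp only [rotate_apply, Fin.reduceAdd]; omega, by simpa [min_comm] using hk⟩
  · exact ⟨4, by simp only [rotate_apply, Fin.reduceAdd]; omega,
      by simpa [min_comm, Nat.xor_comm] using hk⟩
  · exact ⟨1, by simp only [rotate_apply, Fin.reduceAdd]; omega,
      by simpa [min_comm, Nat.xor_comm] using hk⟩
  · exact ⟨2, by simp only [rotate_apply, Fin.reduceAdd]; omega,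
      by simpa [min_comm, Nat.xor_comm] using hk⟩
  · exact ⟨5, by simp only [rotate_apply, Fin.reduceAdd]; omega,
      by simpa [min_comm, Nat.xor_comm] using hk⟩

theorem not_safe_of_ecnMove {x y : Fin 6 → ℕ} (hx : Safe x) (h : ecnMove 6 {2, 3} 3 x y) :
    ¬Safe y := by
  obtain ⟨r, hr⟩ := ecnMove_iff.1 h
  rw [← safe_rotate r]
  exact not_safe_of_moveAtZero ((safe_rotate r x).2 hx) hr

theorem exists_ecnMove_safe {x : Fin 6 → ℕ} (hx : ¬Safe x) :
    ∃ y, ecnMove 6 {2, 3} 3 x y ∧ Safe y := by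
  obtain ⟨r, hsum, ht⟩ := exists_rotate_normal x
  obtain ⟨z, hz, hsafe⟩ := exists_moveAtZero_safe (mt (safe_rotate r x).1 hx) hsum ht
  refine ⟨rotate (-r) z, ecnMove_iff.2 ⟨r, ?_⟩, (safe_rotate _ _).2 hsafe⟩
  rwa [rotate_rotate, add_neg_cancel, rotate_zero]

theorem isP_iff_safe (x : Fin 6 → ℕ) : IsP (ecnMove 6 {2, 3} 3) x ↔ Safe x :=
  isP_iff_of_kernel ecnMove_wellFounded (fun _ _ hx h => not_safe_of_ecnMove hx h)
    (fun _ hx => exists_ecnMove_safe hx) x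

end ECN6

theorem ecn6_23_3_P_iff (n : Fin 6 → ℕ) :
    IsP (ecnMove 6 {2, 3} 3) n ↔
      cyc 6 (fun x => x 0 + x 2 + x 4 = x 1 + x 3 + x 5 ∧ x 0 ^^^ x 1 ^^^ x 2 = 0 ∧
        x 0 ≤ x 3 ∧ x 1 ≤ x 4 ∧ x 2 ≤ x 5) n :=
  (ECN6.isP_iff_safe n).trans (ECN6.safe_iff_cyc n)
end

section
/- A position M = (n_0, ..., n_6) in extended circular nim ECN(7_{1,2}, 4) is a P-position if and only if some cyclic rotation or reflection of M lies in P = {(n_0,...,n_6) : n_0 = n_1 = n_4, n_2 = n_6, n_3 + n_5 = n_0 + n_2, and n_0 = min_i n_i}. -/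
namespace ECN714

def P7 (x : Fin 7 → ℕ) : Prop :=
  x 0 = x 1 ∧ x 1 = x 4 ∧ x 2 = x 6 ∧ x 3 + x 5 = x 0 + x 2 ∧ ∀ i, x 0 ≤ x i

lemma fin7_forall {P : Fin 7 → Prop} (h0 : P 0) (h1 : P 1) (h2 : P 2) (h3 : P 3)
    (h4 : P 4) (h5 : P 5) (h6 : P 6) : ∀ j, P j := by
  intro j; obtain ⟨k, hk⟩ := j; interval_cases k <;> assumption

def rotF (r : ℕ) (x : Fin 7 → ℕ) : Fin 7 → ℕ :=
  fun j => x ⟨(j.1 + r) % 7, Nat.mod_lt _ (by norm_num)⟩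

def refF (r : ℕ) (x : Fin 7 → ℕ) : Fin 7 → ℕ :=
  fun j => x ⟨(r + (7 - j.1)) % 7, Nat.mod_lt _ (by norm_num)⟩

lemma rotF_rotF (a b : ℕ) (x : Fin 7 → ℕ) : rotF a (rotF b x) = rotF (a + b) x :=
  funext fun j => congrArg x (Fin.ext
    (show ((j.1 + a) % 7 + b) % 7 = (j.1 + (a + b)) % 7 by omega))

lemma refF_rotF (a b : ℕ) (x : Fin 7 → ℕ) : refF a (rotF b x) = refF (a + b) x :=
  funext fun j => congrArg x (Fin.ext
    (show ((a + (7 - j.1)) % 7 + b) % 7 = (a + b + (7 - j.1)) % 7 by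
      have := j.isLt; omega))

lemma rotF_refF (a b : ℕ) (x : Fin 7 → ℕ) : rotF a (refF b x) = refF (b + 7 - a % 7) x :=
  funext fun j => congrArg x (Fin.ext
    (show (b + (7 - (j.1 + a) % 7)) % 7 = (b + 7 - a % 7 + (7 - j.1)) % 7 by
      have := j.isLt; omega))

lemma refF_refF (a b : ℕ) (x : Fin 7 → ℕ) : refF a (refF b x) = rotF (b + 7 - a % 7) x :=
  funext fun j => congrArg x (Fin.ext
    (show (b + (7 - (a + (7 - j.1)) % 7)) % 7 = (j.1 + (b + 7 - a % 7)) % 7 by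
      have := j.isLt; omega))

lemma rotF_congr (a b : ℕ) (x : Fin 7 → ℕ) (h : a % 7 = b % 7) : rotF a x = rotF b x :=
  funext fun j => congrArg x (Fin.ext (show (j.1 + a) % 7 = (j.1 + b) % 7 by omega))

lemma refF_congr (a b : ℕ) (x : Fin 7 → ℕ) (h : a % 7 = b % 7) : refF a x = refF b x :=
  funext fun j => congrArg x (Fin.ext
    (show (a + (7 - j.1)) % 7 = (b + (7 - j.1)) % 7 by omega))

lemma rotF_id (a : ℕ) (x : Fin 7 → ℕ) (h : a % 7 = 0) : rotF a x = x :=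
  funext fun j => congrArg x (Fin.ext (show (j.1 + a) % 7 = j.1 by have := j.isLt; omega))

lemma cyc_to_rot (r : ℕ) {x : Fin 7 → ℕ} (h : cyc 7 P7 x) : cyc 7 P7 (rotF r x) := by
  obtain ⟨a, h | h⟩ := h
  · refine ⟨a + 7 - r % 7, Or.inl ?_⟩
    show P7 (rotF (a + 7 - r % 7) (rotF r x))
    rw [rotF_rotF, rotF_congr (a + 7 - r % 7 + r) a x (by omega)]
    exact h
  · refine ⟨a + 7 - r % 7, Or.inr ?_⟩
    show P7 (refF (a + 7 - r % 7) (rotF r x))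
    rw [refF_rotF, refF_congr (a + 7 - r % 7 + r) a x (by omega)]
    exact h

lemma cyc_to_ref (r : ℕ) {x : Fin 7 → ℕ} (h : cyc 7 P7 x) : cyc 7 P7 (refF r x) := by
  obtain ⟨a, h | h⟩ := h
  · refine ⟨r + 7 - a % 7, Or.inr ?_⟩
    show P7 (refF (r + 7 - a % 7) (refF r x))
    rw [refF_refF, rotF_congr (r + 7 - (r + 7 - a % 7) % 7) a x (by omega)]
    exact h
  · refine ⟨r + 7 - a % 7, Or.inl ?_⟩
    show P7 (rotF (r + 7 - a % 7) (refF r x))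
    rw [rotF_refF, refF_congr (r + 7 - (r + 7 - a % 7) % 7) a x (by omega)]
    exact h

lemma move_rot (r : ℕ) {x y : Fin 7 → ℕ} (h : ecnMove 7 {1, 2} 4 x y) :
    ecnMove 7 {1, 2} 4 (rotF r x) (rotF r y) := by
  obtain ⟨hne, hle, s, hs, i, hsup⟩ := h
  have hs' := hs
  simp only [Set.mem_insert_iff, Set.mem_singleton_iff] at hs'
  refine ⟨?_, fun j => hle _, s, hs, i + (7 - r % 7), ?_⟩
  · intro hEq
    apply hne
    have h2 := congrArg (rotF (7 - r % 7)) hEq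
    rw [rotF_rotF, rotF_rotF, rotF_id (7 - r % 7 + r) y (by omega),
      rotF_id (7 - r % 7 + r) x (by omega)] at h2
    exact h2
  · intro j hj
    obtain ⟨t, ht, he⟩ := hsup ⟨(j.1 + r) % 7, Nat.mod_lt _ (by norm_num)⟩ hj
    have he' : (j.1 + r) % 7 = (i + t * s) % 7 := he
    refine ⟨t, ht, ?_⟩
    show j.1 = (i + (7 - r % 7) + t * s) % 7
    have hj7 := j.isLt
    rcases hs' with h1 | h1 <;> subst h1 <;> omega

lemma move_ref (r : ℕ) {x y : Fin 7 → ℕ} (h : ecnMove 7 {1, 2} 4 x y) :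
    ecnMove 7 {1, 2} 4 (refF r x) (refF r y) := by
  obtain ⟨hne, hle, s, hs, i, hsup⟩ := h
  have hs' := hs
  simp only [Set.mem_insert_iff, Set.mem_singleton_iff] at hs'
  refine ⟨?_, fun j => hle _, s, hs, r + 6 * i + (21 - 3 * s), ?_⟩
  · intro hEq
    apply hne
    have h2 := congrArg (refF r) hEq
    rw [refF_refF, refF_refF, rotF_id (r + 7 - r % 7) y (by omega),
      rotF_id (r + 7 - r % 7) x (by omega)] at h2
    exact h2
  · intro j hj
    obtain ⟨t, ht, he⟩ := hsup ⟨(r + (7 - j.1)) % 7, Nat.mod_lt _ (by norm_num)⟩ hj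
    have he' : (r + (7 - j.1)) % 7 = (i + t * s) % 7 := he
    refine ⟨3 - t, by omega, ?_⟩
    show j.1 = (r + 6 * i + (21 - 3 * s) + (3 - t) * s) % 7
    have hj7 := j.isLt
    rcases hs' with h1 | h1 <;> subst h1 <;> omega


lemma cycW_rot0 (y : Fin 7 → ℕ) (e1 : y 0 = y 1) (e2 : y 1 = y 4) (e3 : y 2 = y 6)
    (e4 : y 3 + y 5 = y 0 + y 2)
    (m0 : y 0 ≤ y 0) (m1 : y 0 ≤ y 1) (m2 : y 0 ≤ y 2) (m3 : y 0 ≤ y 3)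
    (m4 : y 0 ≤ y 4) (m5 : y 0 ≤ y 5) (m6 : y 0 ≤ y 6) : cyc 7 P7 y :=
  ⟨0, Or.inl ⟨e1, e2, e3, e4, fin7_forall m0 m1 m2 m3 m4 m5 m6⟩⟩

lemma cycW_rot3 (y : Fin 7 → ℕ) (e1 : y 3 = y 4) (e2 : y 4 = y 0) (e3 : y 5 = y 2)
    (e4 : y 6 + y 1 = y 3 + y 5)
    (m0 : y 3 ≤ y 0) (m1 : y 3 ≤ y 1) (m2 : y 3 ≤ y 2) (m3 : y 3 ≤ y 3)
    (m4 : y 3 ≤ y 4) (m5 : y 3 ≤ y 5) (m6 : y 3 ≤ y 6) : cyc 7 P7 y :=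
  ⟨3, Or.inl ⟨e1, e2, e3, e4, fin7_forall m3 m4 m5 m6 m0 m1 m2⟩⟩

lemma cycW_ref0 (y : Fin 7 → ℕ) (e1 : y 0 = y 6) (e2 : y 6 = y 3) (e3 : y 5 = y 1)
    (e4 : y 4 + y 2 = y 0 + y 5)
    (m0 : y 0 ≤ y 0) (m1 : y 0 ≤ y 1) (m2 : y 0 ≤ y 2) (m3 : y 0 ≤ y 3)
    (m4 : y 0 ≤ y 4) (m5 : y 0 ≤ y 5) (m6 : y 0 ≤ y 6) : cyc 7 P7 y :=
  ⟨0, Or.inr ⟨e1, e2, e3, e4, fin7_forall m0 m6 m5 m4 m3 m2 m1⟩⟩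

lemma cyc_elim (y : Fin 7 → ℕ) (h : cyc 7 P7 y) :
    (y 0 = y 1 ∧ y 1 = y 4 ∧ y 2 = y 6 ∧ y 3 + y 5 = y 0 + y 2 ∧ y 0 ≤ y 1 ∧ y 0 ≤ y 2 ∧ y 0 ≤ y 3 ∧ y 0 ≤ y 4 ∧ y 0 ≤ y 5 ∧ y 0 ≤ y 6) ∨
    (y 1 = y 2 ∧ y 2 = y 5 ∧ y 3 = y 0 ∧ y 4 + y 6 = y 1 + y 3 ∧ y 1 ≤ y 0 ∧ y 1 ≤ y 2 ∧ y 1 ≤ y 3 ∧ y 1 ≤ y 4 ∧ y 1 ≤ y 5 ∧ y 1 ≤ y 6) ∨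
    (y 2 = y 3 ∧ y 3 = y 6 ∧ y 4 = y 1 ∧ y 5 + y 0 = y 2 + y 4 ∧ y 2 ≤ y 0 ∧ y 2 ≤ y 1 ∧ y 2 ≤ y 3 ∧ y 2 ≤ y 4 ∧ y 2 ≤ y 5 ∧ y 2 ≤ y 6) ∨
    (y 3 = y 4 ∧ y 4 = y 0 ∧ y 5 = y 2 ∧ y 6 + y 1 = y 3 + y 5 ∧ y 3 ≤ y 0 ∧ y 3 ≤ y 1 ∧ y 3 ≤ y 2 ∧ y 3 ≤ y 4 ∧ y 3 ≤ y 5 ∧ y 3 ≤ y 6) ∨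
    (y 4 = y 5 ∧ y 5 = y 1 ∧ y 6 = y 3 ∧ y 0 + y 2 = y 4 + y 6 ∧ y 4 ≤ y 0 ∧ y 4 ≤ y 1 ∧ y 4 ≤ y 2 ∧ y 4 ≤ y 3 ∧ y 4 ≤ y 5 ∧ y 4 ≤ y 6) ∨
    (y 5 = y 6 ∧ y 6 = y 2 ∧ y 0 = y 4 ∧ y 1 + y 3 = y 5 + y 0 ∧ y 5 ≤ y 0 ∧ y 5 ≤ y 1 ∧ y 5 ≤ y 2 ∧ y 5 ≤ y 3 ∧ y 5 ≤ y 4 ∧ y 5 ≤ y 6) ∨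
    (y 6 = y 0 ∧ y 0 = y 3 ∧ y 1 = y 5 ∧ y 2 + y 4 = y 6 + y 1 ∧ y 6 ≤ y 0 ∧ y 6 ≤ y 1 ∧ y 6 ≤ y 2 ∧ y 6 ≤ y 3 ∧ y 6 ≤ y 4 ∧ y 6 ≤ y 5) ∨
    (y 0 = y 6 ∧ y 6 = y 3 ∧ y 5 = y 1 ∧ y 4 + y 2 = y 0 + y 5 ∧ y 0 ≤ y 1 ∧ y 0 ≤ y 2 ∧ y 0 ≤ y 3 ∧ y 0 ≤ y 4 ∧ y 0 ≤ y 5 ∧ y 0 ≤ y 6) ∨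
    (y 1 = y 0 ∧ y 0 = y 4 ∧ y 6 = y 2 ∧ y 5 + y 3 = y 1 + y 6 ∧ y 1 ≤ y 0 ∧ y 1 ≤ y 2 ∧ y 1 ≤ y 3 ∧ y 1 ≤ y 4 ∧ y 1 ≤ y 5 ∧ y 1 ≤ y 6) ∨
    (y 2 = y 1 ∧ y 1 = y 5 ∧ y 0 = y 3 ∧ y 6 + y 4 = y 2 + y 0 ∧ y 2 ≤ y 0 ∧ y 2 ≤ y 1 ∧ y 2 ≤ y 3 ∧ y 2 ≤ y 4 ∧ y 2 ≤ y 5 ∧ y 2 ≤ y 6) ∨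
    (y 3 = y 2 ∧ y 2 = y 6 ∧ y 1 = y 4 ∧ y 0 + y 5 = y 3 + y 1 ∧ y 3 ≤ y 0 ∧ y 3 ≤ y 1 ∧ y 3 ≤ y 2 ∧ y 3 ≤ y 4 ∧ y 3 ≤ y 5 ∧ y 3 ≤ y 6) ∨
    (y 4 = y 3 ∧ y 3 = y 0 ∧ y 2 = y 5 ∧ y 1 + y 6 = y 4 + y 2 ∧ y 4 ≤ y 0 ∧ y 4 ≤ y 1 ∧ y 4 ≤ y 2 ∧ y 4 ≤ y 3 ∧ y 4 ≤ y 5 ∧ y 4 ≤ y 6) ∨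
    (y 5 = y 4 ∧ y 4 = y 1 ∧ y 3 = y 6 ∧ y 2 + y 0 = y 5 + y 3 ∧ y 5 ≤ y 0 ∧ y 5 ≤ y 1 ∧ y 5 ≤ y 2 ∧ y 5 ≤ y 3 ∧ y 5 ≤ y 4 ∧ y 5 ≤ y 6) ∨
    (y 6 = y 5 ∧ y 5 = y 2 ∧ y 4 = y 0 ∧ y 3 + y 1 = y 6 + y 4 ∧ y 6 ≤ y 0 ∧ y 6 ≤ y 1 ∧ y 6 ≤ y 2 ∧ y 6 ≤ y 3 ∧ y 6 ≤ y 4 ∧ y 6 ≤ y 5) := by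
  obtain ⟨r, h | h⟩ := h
  · have h' : P7 (rotF (r % 7) y) := by
      rw [rotF_congr (r % 7) r y (by omega)]; exact h
    obtain ⟨q, hq7, hqe⟩ : ∃ q, q < 7 ∧ r % 7 = q := ⟨_, Nat.mod_lt _ (by norm_num), rfl⟩
    rw [hqe] at h'
    obtain ⟨e1, e2, e3, e4, hm⟩ := h'
    interval_cases q
    · exact Or.inl (⟨e1, e2, e3, e4, hm 1, hm 2, hm 3, hm 4, hm 5, hm 6⟩)
    · exact Or.inr (Or.inl (⟨e1, e2, e3, e4, hm 6, hm 1, hm 2, hm 3, hm 4, hm 5⟩))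
    · exact Or.inr (Or.inr (Or.inl (⟨e1, e2, e3, e4, hm 5, hm 6, hm 1, hm 2, hm 3, hm 4⟩)))
    · exact Or.inr (Or.inr (Or.inr (Or.inl (⟨e1, e2, e3, e4, hm 4, hm 5, hm 6, hm 1, hm 2, hm 3⟩))))
    · exact Or.inr (Or.inr (Or.inr (Or.inr (Or.inl (⟨e1, e2, e3, e4, hm 3, hm 4, hm 5, hm 6, hm 1, hm 2⟩)))))
    · exact Or.inr (Or.inr (Or.inr (Or.inr (Or.inr (Or.inl (⟨e1, e2, e3, e4, hm 2, hm 3, hm 4, hm 5, hm 6, hm 1⟩))))))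
    · exact Or.inr (Or.inr (Or.inr (Or.inr (Or.inr (Or.inr (Or.inl (⟨e1, e2, e3, e4, hm 1, hm 2, hm 3, hm 4, hm 5, hm 6⟩)))))))
  · have h' : P7 (refF (r % 7) y) := by
      rw [refF_congr (r % 7) r y (by omega)]; exact h
    obtain ⟨q, hq7, hqe⟩ : ∃ q, q < 7 ∧ r % 7 = q := ⟨_, Nat.mod_lt _ (by norm_num), rfl⟩
    rw [hqe] at h'
    obtain ⟨e1, e2, e3, e4, hm⟩ := h'
    interval_cases q
    · exact Or.inr (Or.inr (Or.inr (Or.inr (Or.inr (Or.inr (Or.inr (Or.inl (⟨e1, e2, e3, e4, hm 6, hm 5, hm 4, hm 3, hm 2, hm 1⟩))))))))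
    · exact Or.inr (Or.inr (Or.inr (Or.inr (Or.inr (Or.inr (Or.inr (Or.inr (Or.inl (⟨e1, e2, e3, e4, hm 1, hm 6, hm 5, hm 4, hm 3, hm 2⟩)))))))))
    · exact Or.inr (Or.inr (Or.inr (Or.inr (Or.inr (Or.inr (Or.inr (Or.inr (Or.inr (Or.inl (⟨e1, e2, e3, e4, hm 2, hm 1, hm 6, hm 5, hm 4, hm 3⟩))))))))))
    · exact Or.inr (Or.inr (Or.inr (Or.inr (Or.inr (Or.inr (Or.inr (Or.inr (Or.inr (Or.inr (Or.inl (⟨e1, e2, e3, e4, hm 3, hm 2, hm 1, hm 6, hm 5, hm 4⟩)))))))))))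
    · exact Or.inr (Or.inr (Or.inr (Or.inr (Or.inr (Or.inr (Or.inr (Or.inr (Or.inr (Or.inr (Or.inr (Or.inl (⟨e1, e2, e3, e4, hm 4, hm 3, hm 2, hm 1, hm 6, hm 5⟩))))))))))))
    · exact Or.inr (Or.inr (Or.inr (Or.inr (Or.inr (Or.inr (Or.inr (Or.inr (Or.inr (Or.inr (Or.inr (Or.inr (Or.inl (⟨e1, e2, e3, e4, hm 5, hm 4, hm 3, hm 2, hm 1, hm 6⟩)))))))))))))
    · exact Or.inr (Or.inr (Or.inr (Or.inr (Or.inr (Or.inr (Or.inr (Or.inr (Or.inr (Or.inr (Or.inr (Or.inr (Or.inr (⟨e1, e2, e3, e4, hm 6, hm 5, hm 4, hm 3, hm 2, hm 1⟩)))))))))))))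

lemma move_elim (x y : Fin 7 → ℕ) (h : ecnMove 7 {1, 2} 4 x y) :
    (∀ j, y j ≤ x j) ∧
    (y 0 + y 1 + y 2 + y 3 + y 4 + y 5 + y 6 < x 0 + x 1 + x 2 + x 3 + x 4 + x 5 + x 6) ∧
    ((y 4 = x 4 ∧ y 5 = x 5 ∧ y 6 = x 6) ∨
    (y 0 = x 0 ∧ y 5 = x 5 ∧ y 6 = x 6) ∨
    (y 0 = x 0 ∧ y 1 = x 1 ∧ y 6 = x 6) ∨
    (y 0 = x 0 ∧ y 1 = x 1 ∧ y 2 = x 2) ∨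
    (y 1 = x 1 ∧ y 2 = x 2 ∧ y 3 = x 3) ∨
    (y 2 = x 2 ∧ y 3 = x 3 ∧ y 4 = x 4) ∨
    (y 3 = x 3 ∧ y 4 = x 4 ∧ y 5 = x 5) ∨
    (y 1 = x 1 ∧ y 3 = x 3 ∧ y 5 = x 5) ∨
    (y 2 = x 2 ∧ y 4 = x 4 ∧ y 6 = x 6) ∨
    (y 0 = x 0 ∧ y 3 = x 3 ∧ y 5 = x 5) ∨
    (y 1 = x 1 ∧ y 4 = x 4 ∧ y 6 = x 6) ∨
    (y 0 = x 0 ∧ y 2 = x 2 ∧ y 5 = x 5) ∨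
    (y 1 = x 1 ∧ y 3 = x 3 ∧ y 6 = x 6) ∨
    (y 0 = x 0 ∧ y 2 = x 2 ∧ y 4 = x 4)) := by
  obtain ⟨hne, hle, s, hs, i, hsup⟩ := h
  refine ⟨hle, ?_, ?_⟩
  · have hlt := Finset.sum_lt_sum (s := Finset.univ) (f := y) (g := x) (fun j _ => hle j) ?_
    · rwa [Fin.sum_univ_seven, Fin.sum_univ_seven] at hlt
    · obtain ⟨j, hj⟩ := Function.ne_iff.mp hne
      exact ⟨j, Finset.mem_univ j, (hle j).lt_of_ne hj⟩
  · simp only [Set.mem_insert_iff, Set.mem_singleton_iff] at hs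
    obtain ⟨q, hq7, hq⟩ : ∃ q, q < 7 ∧ i % 7 = q := ⟨_, Nat.mod_lt _ (by norm_num), rfl⟩
    rcases hs with hs | hs <;> subst hs <;> interval_cases q
    · -- s=1 q=0
      have e4 : y 4 = x 4 := by
        by_contra hc
        obtain ⟨t, ht, he⟩ := hsup 4 hc
        have he' : (4 : ℕ) = (i + t * 1) % 7 := he
        omega
      have e5 : y 5 = x 5 := by
        by_contra hc
        obtain ⟨t, ht, he⟩ := hsup 5 hc
        have he' : (5 : ℕ) = (i + t * 1) % 7 := he
        omega
      have e6 : y 6 = x 6 := by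
        by_contra hc
        obtain ⟨t, ht, he⟩ := hsup 6 hc
        have he' : (6 : ℕ) = (i + t * 1) % 7 := he
        omega
      exact Or.inl (⟨e4, e5, e6⟩)
    · -- s=1 q=1
      have e0 : y 0 = x 0 := by
        by_contra hc
        obtain ⟨t, ht, he⟩ := hsup 0 hc
        have he' : (0 : ℕ) = (i + t * 1) % 7 := he
        omega
      have e5 : y 5 = x 5 := by
        by_contra hc
        obtain ⟨t, ht, he⟩ := hsup 5 hc
        have he' : (5 : ℕ) = (i + t * 1) % 7 := he
        omega
      have e6 : y 6 = x 6 := by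
        by_contra hc
        obtain ⟨t, ht, he⟩ := hsup 6 hc
        have he' : (6 : ℕ) = (i + t * 1) % 7 := he
        omega
      exact Or.inr (Or.inl (⟨e0, e5, e6⟩))
    · -- s=1 q=2
      have e0 : y 0 = x 0 := by
        by_contra hc
        obtain ⟨t, ht, he⟩ := hsup 0 hc
        have he' : (0 : ℕ) = (i + t * 1) % 7 := he
        omega
      have e1 : y 1 = x 1 := by
        by_contra hc
        obtain ⟨t, ht, he⟩ := hsup 1 hc
        have he' : (1 : ℕ) = (i + t * 1) % 7 := he
        omega
      have e6 : y 6 = x 6 := by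
        by_contra hc
        obtain ⟨t, ht, he⟩ := hsup 6 hc
        have he' : (6 : ℕ) = (i + t * 1) % 7 := he
        omega
      exact Or.inr (Or.inr (Or.inl (⟨e0, e1, e6⟩)))
    · -- s=1 q=3
      have e0 : y 0 = x 0 := by
        by_contra hc
        obtain ⟨t, ht, he⟩ := hsup 0 hc
        have he' : (0 : ℕ) = (i + t * 1) % 7 := he
        omega
      have e1 : y 1 = x 1 := by
        by_contra hc
        obtain ⟨t, ht, he⟩ := hsup 1 hc
        have he' : (1 : ℕ) = (i + t * 1) % 7 := he
        omega
      have e2 : y 2 = x 2 := by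
        by_contra hc
        obtain ⟨t, ht, he⟩ := hsup 2 hc
        have he' : (2 : ℕ) = (i + t * 1) % 7 := he
        omega
      exact Or.inr (Or.inr (Or.inr (Or.inl (⟨e0, e1, e2⟩))))
    · -- s=1 q=4
      have e1 : y 1 = x 1 := by
        by_contra hc
        obtain ⟨t, ht, he⟩ := hsup 1 hc
        have he' : (1 : ℕ) = (i + t * 1) % 7 := he
        omega
      have e2 : y 2 = x 2 := by
        by_contra hc
        obtain ⟨t, ht, he⟩ := hsup 2 hc
        have he' : (2 : ℕ) = (i + t * 1) % 7 := he
        omega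
      have e3 : y 3 = x 3 := by
        by_contra hc
        obtain ⟨t, ht, he⟩ := hsup 3 hc
        have he' : (3 : ℕ) = (i + t * 1) % 7 := he
        omega
      exact Or.inr (Or.inr (Or.inr (Or.inr (Or.inl (⟨e1, e2, e3⟩)))))
    · -- s=1 q=5
      have e2 : y 2 = x 2 := by
        by_contra hc
        obtain ⟨t, ht, he⟩ := hsup 2 hc
        have he' : (2 : ℕ) = (i + t * 1) % 7 := he
        omega
      have e3 : y 3 = x 3 := by
        by_contra hc
        obtain ⟨t, ht, he⟩ := hsup 3 hc
        have he' : (3 : ℕ) = (i + t * 1) % 7 := he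
        omega
      have e4 : y 4 = x 4 := by
        by_contra hc
        obtain ⟨t, ht, he⟩ := hsup 4 hc
        have he' : (4 : ℕ) = (i + t * 1) % 7 := he
        omega
      exact Or.inr (Or.inr (Or.inr (Or.inr (Or.inr (Or.inl (⟨e2, e3, e4⟩))))))
    · -- s=1 q=6
      have e3 : y 3 = x 3 := by
        by_contra hc
        obtain ⟨t, ht, he⟩ := hsup 3 hc
        have he' : (3 : ℕ) = (i + t * 1) % 7 := he
        omega
      have e4 : y 4 = x 4 := by
        by_contra hc
        obtain ⟨t, ht, he⟩ := hsup 4 hc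
        have he' : (4 : ℕ) = (i + t * 1) % 7 := he
        omega
      have e5 : y 5 = x 5 := by
        by_contra hc
        obtain ⟨t, ht, he⟩ := hsup 5 hc
        have he' : (5 : ℕ) = (i + t * 1) % 7 := he
        omega
      exact Or.inr (Or.inr (Or.inr (Or.inr (Or.inr (Or.inr (Or.inl (⟨e3, e4, e5⟩)))))))
    · -- s=2 q=0
      have e1 : y 1 = x 1 := by
        by_contra hc
        obtain ⟨t, ht, he⟩ := hsup 1 hc
        have he' : (1 : ℕ) = (i + t * 2) % 7 := he
        omega
      have e3 : y 3 = x 3 := by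
        by_contra hc
        obtain ⟨t, ht, he⟩ := hsup 3 hc
        have he' : (3 : ℕ) = (i + t * 2) % 7 := he
        omega
      have e5 : y 5 = x 5 := by
        by_contra hc
        obtain ⟨t, ht, he⟩ := hsup 5 hc
        have he' : (5 : ℕ) = (i + t * 2) % 7 := he
        omega
      exact Or.inr (Or.inr (Or.inr (Or.inr (Or.inr (Or.inr (Or.inr (Or.inl (⟨e1, e3, e5⟩))))))))
    · -- s=2 q=1
      have e2 : y 2 = x 2 := by
        by_contra hc
        obtain ⟨t, ht, he⟩ := hsup 2 hc
        have he' : (2 : ℕ) = (i + t * 2) % 7 := he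
        omega
      have e4 : y 4 = x 4 := by
        by_contra hc
        obtain ⟨t, ht, he⟩ := hsup 4 hc
        have he' : (4 : ℕ) = (i + t * 2) % 7 := he
        omega
      have e6 : y 6 = x 6 := by
        by_contra hc
        obtain ⟨t, ht, he⟩ := hsup 6 hc
        have he' : (6 : ℕ) = (i + t * 2) % 7 := he
        omega
      exact Or.inr (Or.inr (Or.inr (Or.inr (Or.inr (Or.inr (Or.inr (Or.inr (Or.inl (⟨e2, e4, e6⟩)))))))))
    · -- s=2 q=2
      have e0 : y 0 = x 0 := by
        by_contra hc
        obtain ⟨t, ht, he⟩ := hsup 0 hc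
        have he' : (0 : ℕ) = (i + t * 2) % 7 := he
        omega
      have e3 : y 3 = x 3 := by
        by_contra hc
        obtain ⟨t, ht, he⟩ := hsup 3 hc
        have he' : (3 : ℕ) = (i + t * 2) % 7 := he
        omega
      have e5 : y 5 = x 5 := by
        by_contra hc
        obtain ⟨t, ht, he⟩ := hsup 5 hc
        have he' : (5 : ℕ) = (i + t * 2) % 7 := he
        omega
      exact Or.inr (Or.inr (Or.inr (Or.inr (Or.inr (Or.inr (Or.inr (Or.inr (Or.inr (Or.inl (⟨e0, e3, e5⟩))))))))))
    · -- s=2 q=3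
      have e1 : y 1 = x 1 := by
        by_contra hc
        obtain ⟨t, ht, he⟩ := hsup 1 hc
        have he' : (1 : ℕ) = (i + t * 2) % 7 := he
        omega
      have e4 : y 4 = x 4 := by
        by_contra hc
        obtain ⟨t, ht, he⟩ := hsup 4 hc
        have he' : (4 : ℕ) = (i + t * 2) % 7 := he
        omega
      have e6 : y 6 = x 6 := by
        by_contra hc
        obtain ⟨t, ht, he⟩ := hsup 6 hc
        have he' : (6 : ℕ) = (i + t * 2) % 7 := he
        omega
      exact Or.inr (Or.inr (Or.inr (Or.inr (Or.inr (Or.inr (Or.inr (Or.inr (Or.inr (Or.inr (Or.inl (⟨e1, e4, e6⟩)))))))))))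
    · -- s=2 q=4
      have e0 : y 0 = x 0 := by
        by_contra hc
        obtain ⟨t, ht, he⟩ := hsup 0 hc
        have he' : (0 : ℕ) = (i + t * 2) % 7 := he
        omega
      have e2 : y 2 = x 2 := by
        by_contra hc
        obtain ⟨t, ht, he⟩ := hsup 2 hc
        have he' : (2 : ℕ) = (i + t * 2) % 7 := he
        omega
      have e5 : y 5 = x 5 := by
        by_contra hc
        obtain ⟨t, ht, he⟩ := hsup 5 hc
        have he' : (5 : ℕ) = (i + t * 2) % 7 := he
        omega
      exact Or.inr (Or.inr (Or.inr (Or.inr (Or.inr (Or.inr (Or.inr (Or.inr (Or.inr (Or.inr (Or.inr (Or.inl (⟨e0, e2, e5⟩))))))))))))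
    · -- s=2 q=5
      have e1 : y 1 = x 1 := by
        by_contra hc
        obtain ⟨t, ht, he⟩ := hsup 1 hc
        have he' : (1 : ℕ) = (i + t * 2) % 7 := he
        omega
      have e3 : y 3 = x 3 := by
        by_contra hc
        obtain ⟨t, ht, he⟩ := hsup 3 hc
        have he' : (3 : ℕ) = (i + t * 2) % 7 := he
        omega
      have e6 : y 6 = x 6 := by
        by_contra hc
        obtain ⟨t, ht, he⟩ := hsup 6 hc
        have he' : (6 : ℕ) = (i + t * 2) % 7 := he
        omega
      exact Or.inr (Or.inr (Or.inr (Or.inr (Or.inr (Or.inr (Or.inr (Or.inr (Or.inr (Or.inr (Or.inr (Or.inr (Or.inl (⟨e1, e3, e6⟩)))))))))))))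
    · -- s=2 q=6
      have e0 : y 0 = x 0 := by
        by_contra hc
        obtain ⟨t, ht, he⟩ := hsup 0 hc
        have he' : (0 : ℕ) = (i + t * 2) % 7 := he
        omega
      have e2 : y 2 = x 2 := by
        by_contra hc
        obtain ⟨t, ht, he⟩ := hsup 2 hc
        have he' : (2 : ℕ) = (i + t * 2) % 7 := he
        omega
      have e4 : y 4 = x 4 := by
        by_contra hc
        obtain ⟨t, ht, he⟩ := hsup 4 hc
        have he' : (4 : ℕ) = (i + t * 2) % 7 := he
        omega
      exact Or.inr (Or.inr (Or.inr (Or.inr (Or.inr (Or.inr (Or.inr (Or.inr (Or.inr (Or.inr (Or.inr (Or.inr (Or.inr (⟨e0, e2, e4⟩)))))))))))))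

set_option maxHeartbeats 3200000 in
lemma lemA_core {x y : Fin 7 → ℕ} (hx : P7 x) (hm : ecnMove 7 {1, 2} 4 x y)
    (hy : cyc 7 P7 y) : False := by
  obtain ⟨hle, hsum, hmv⟩ := move_elim x y hm
  have hdy := cyc_elim y hy
  obtain ⟨p1, p2, p3, p4, pm⟩ := hx
  have m1 := pm 1; have m2 := pm 2; have m3 := pm 3
  have m4 := pm 4; have m5 := pm 5; have m6 := pm 6
  have l0 := hle 0; have l1 := hle 1; have l2 := hle 2; have l3 := hle 3
  have l4 := hle 4; have l5 := hle 5; have l6 := hle 6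
  omega

lemma lemA {x y : Fin 7 → ℕ} (hx : cyc 7 P7 x) (hm : ecnMove 7 {1, 2} 4 x y) :
    ¬ cyc 7 P7 y := by
  intro hy
  obtain ⟨r, h | h⟩ := hx
  · exact lemA_core (x := rotF r x) h (move_rot r hm) (cyc_to_rot r hy)
  · exact lemA_core (x := refF r x) h (move_ref r hm) (cyc_to_ref r hy)


set_option maxHeartbeats 1600000 in
lemma lemB0 (x : Fin 7 → ℕ) (hmin : ∀ j, x 0 ≤ x j) (hx : ¬ cyc 7 P7 x) :
    ∃ y, ecnMove 7 {1, 2} 4 x y ∧ cyc 7 P7 y := by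
  have m1 := hmin 1; have m2 := hmin 2; have m3 := hmin 3
  have m4 := hmin 4; have m5 := hmin 5; have m6 := hmin 6
  by_cases hg0 : x 2 ≤ x 1 ∧ x 1 ≤ x 5 ∧ x 0 + x 1 ≤ x 4 + x 2
  · have v0 : (![x 0, x 1, x 2, x 0, x 0 + x 1 - x 2, x 1, x 0] : Fin 7 → ℕ) 0 = x 0 := rfl
    have v1 : (![x 0, x 1, x 2, x 0, x 0 + x 1 - x 2, x 1, x 0] : Fin 7 → ℕ) 1 = x 1 := rfl
    have v2 : (![x 0, x 1, x 2, x 0, x 0 + x 1 - x 2, x 1, x 0] : Fin 7 → ℕ) 2 = x 2 := rfl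
    have v3 : (![x 0, x 1, x 2, x 0, x 0 + x 1 - x 2, x 1, x 0] : Fin 7 → ℕ) 3 = x 0 := rfl
    have v4 : (![x 0, x 1, x 2, x 0, x 0 + x 1 - x 2, x 1, x 0] : Fin 7 → ℕ) 4 = x 0 + x 1 - x 2 := rfl
    have v5 : (![x 0, x 1, x 2, x 0, x 0 + x 1 - x 2, x 1, x 0] : Fin 7 → ℕ) 5 = x 1 := rfl
    have v6 : (![x 0, x 1, x 2, x 0, x 0 + x 1 - x 2, x 1, x 0] : Fin 7 → ℕ) 6 = x 0 := rfl
    have hcy : cyc 7 P7 (![x 0, x 1, x 2, x 0, x 0 + x 1 - x 2, x 1, x 0] : Fin 7 → ℕ) := by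
      apply cycW_ref0 <;> simp only [v0, v1, v2, v3, v4, v5, v6] <;> omega
    refine ⟨_, ⟨?_, ?_, 1, by norm_num, 3, ?_⟩, hcy⟩
    · intro hEq; exact hx (hEq ▸ hcy)
    · apply fin7_forall <;> simp only [v0, v1, v2, v3, v4, v5, v6] <;> omega
    · apply fin7_forall
      · exact fun hc => absurd (rfl : (![x 0, x 1, x 2, x 0, x 0 + x 1 - x 2, x 1, x 0] : Fin 7 → ℕ) 0 = x 0) hc
      · exact fun hc => absurd (rfl : (![x 0, x 1, x 2, x 0, x 0 + x 1 - x 2, x 1, x 0] : Fin 7 → ℕ) 1 = x 1) hc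
      · exact fun hc => absurd (rfl : (![x 0, x 1, x 2, x 0, x 0 + x 1 - x 2, x 1, x 0] : Fin 7 → ℕ) 2 = x 2) hc
      · exact fun _ => ⟨0, by norm_num, by decide⟩
      · exact fun _ => ⟨1, by norm_num, by decide⟩
      · exact fun _ => ⟨2, by norm_num, by decide⟩
      · exact fun _ => ⟨3, by norm_num, by decide⟩
  by_cases hg1 : x 5 ≤ x 6 ∧ x 6 ≤ x 2 ∧ x 0 + x 6 ≤ x 3 + x 5
  · have v0 : (![x 0, x 0, x 6, x 0 + x 6 - x 5, x 0, x 5, x 6] : Fin 7 → ℕ) 0 = x 0 := rfl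
    have v1 : (![x 0, x 0, x 6, x 0 + x 6 - x 5, x 0, x 5, x 6] : Fin 7 → ℕ) 1 = x 0 := rfl
    have v2 : (![x 0, x 0, x 6, x 0 + x 6 - x 5, x 0, x 5, x 6] : Fin 7 → ℕ) 2 = x 6 := rfl
    have v3 : (![x 0, x 0, x 6, x 0 + x 6 - x 5, x 0, x 5, x 6] : Fin 7 → ℕ) 3 = x 0 + x 6 - x 5 := rfl
    have v4 : (![x 0, x 0, x 6, x 0 + x 6 - x 5, x 0, x 5, x 6] : Fin 7 → ℕ) 4 = x 0 := rfl
    have v5 : (![x 0, x 0, x 6, x 0 + x 6 - x 5, x 0, x 5, x 6] : Fin 7 → ℕ) 5 = x 5 := rfl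
    have v6 : (![x 0, x 0, x 6, x 0 + x 6 - x 5, x 0, x 5, x 6] : Fin 7 → ℕ) 6 = x 6 := rfl
    have hcy : cyc 7 P7 (![x 0, x 0, x 6, x 0 + x 6 - x 5, x 0, x 5, x 6] : Fin 7 → ℕ) := by
      apply cycW_rot0 <;> simp only [v0, v1, v2, v3, v4, v5, v6] <;> omega
    refine ⟨_, ⟨?_, ?_, 1, by norm_num, 1, ?_⟩, hcy⟩
    · intro hEq; exact hx (hEq ▸ hcy)
    · apply fin7_forall <;> simp only [v0, v1, v2, v3, v4, v5, v6] <;> omega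
    · apply fin7_forall
      · exact fun hc => absurd (rfl : (![x 0, x 0, x 6, x 0 + x 6 - x 5, x 0, x 5, x 6] : Fin 7 → ℕ) 0 = x 0) hc
      · exact fun _ => ⟨0, by norm_num, by decide⟩
      · exact fun _ => ⟨1, by norm_num, by decide⟩
      · exact fun _ => ⟨2, by norm_num, by decide⟩
      · exact fun _ => ⟨3, by norm_num, by decide⟩
      · exact fun hc => absurd (rfl : (![x 0, x 0, x 6, x 0 + x 6 - x 5, x 0, x 5, x 6] : Fin 7 → ℕ) 5 = x 5) hc
      · exact fun hc => absurd (rfl : (![x 0, x 0, x 6, x 0 + x 6 - x 5, x 0, x 5, x 6] : Fin 7 → ℕ) 6 = x 6) hc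
  by_cases hg2 : x 1 + x 6 ≤ x 0 + x 5 ∧ x 1 + x 6 ≤ x 0 + x 2
  · have v0 : (![x 0, x 1, x 1 + x 6 - x 0, x 0, x 0, x 1 + x 6 - x 0, x 6] : Fin 7 → ℕ) 0 = x 0 := rfl
    have v1 : (![x 0, x 1, x 1 + x 6 - x 0, x 0, x 0, x 1 + x 6 - x 0, x 6] : Fin 7 → ℕ) 1 = x 1 := rfl
    have v2 : (![x 0, x 1, x 1 + x 6 - x 0, x 0, x 0, x 1 + x 6 - x 0, x 6] : Fin 7 → ℕ) 2 = x 1 + x 6 - x 0 := rfl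
    have v3 : (![x 0, x 1, x 1 + x 6 - x 0, x 0, x 0, x 1 + x 6 - x 0, x 6] : Fin 7 → ℕ) 3 = x 0 := rfl
    have v4 : (![x 0, x 1, x 1 + x 6 - x 0, x 0, x 0, x 1 + x 6 - x 0, x 6] : Fin 7 → ℕ) 4 = x 0 := rfl
    have v5 : (![x 0, x 1, x 1 + x 6 - x 0, x 0, x 0, x 1 + x 6 - x 0, x 6] : Fin 7 → ℕ) 5 = x 1 + x 6 - x 0 := rfl
    have v6 : (![x 0, x 1, x 1 + x 6 - x 0, x 0, x 0, x 1 + x 6 - x 0, x 6] : Fin 7 → ℕ) 6 = x 6 := rfl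
    have hcy : cyc 7 P7 (![x 0, x 1, x 1 + x 6 - x 0, x 0, x 0, x 1 + x 6 - x 0, x 6] : Fin 7 → ℕ) := by
      apply cycW_rot3 <;> simp only [v0, v1, v2, v3, v4, v5, v6] <;> omega
    refine ⟨_, ⟨?_, ?_, 1, by norm_num, 2, ?_⟩, hcy⟩
    · intro hEq; exact hx (hEq ▸ hcy)
    · apply fin7_forall <;> simp only [v0, v1, v2, v3, v4, v5, v6] <;> omega
    · apply fin7_forall
      · exact fun hc => absurd (rfl : (![x 0, x 1, x 1 + x 6 - x 0, x 0, x 0, x 1 + x 6 - x 0, x 6] : Fin 7 → ℕ) 0 = x 0) hc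
      · exact fun hc => absurd (rfl : (![x 0, x 1, x 1 + x 6 - x 0, x 0, x 0, x 1 + x 6 - x 0, x 6] : Fin 7 → ℕ) 1 = x 1) hc
      · exact fun _ => ⟨0, by norm_num, by decide⟩
      · exact fun _ => ⟨1, by norm_num, by decide⟩
      · exact fun _ => ⟨2, by norm_num, by decide⟩
      · exact fun _ => ⟨3, by norm_num, by decide⟩
      · exact fun hc => absurd (rfl : (![x 0, x 1, x 1 + x 6 - x 0, x 0, x 0, x 1 + x 6 - x 0, x 6] : Fin 7 → ℕ) 6 = x 6) hc
  by_cases hg3 : x 2 + x 4 ≤ x 0 + x 5 ∧ x 2 + x 4 ≤ x 0 + x 1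
  · have v0 : (![x 0, x 2 + x 4 - x 0, x 2, x 0, x 4, x 2 + x 4 - x 0, x 0] : Fin 7 → ℕ) 0 = x 0 := rfl
    have v1 : (![x 0, x 2 + x 4 - x 0, x 2, x 0, x 4, x 2 + x 4 - x 0, x 0] : Fin 7 → ℕ) 1 = x 2 + x 4 - x 0 := rfl
    have v2 : (![x 0, x 2 + x 4 - x 0, x 2, x 0, x 4, x 2 + x 4 - x 0, x 0] : Fin 7 → ℕ) 2 = x 2 := rfl
    have v3 : (![x 0, x 2 + x 4 - x 0, x 2, x 0, x 4, x 2 + x 4 - x 0, x 0] : Fin 7 → ℕ) 3 = x 0 := rfl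
    have v4 : (![x 0, x 2 + x 4 - x 0, x 2, x 0, x 4, x 2 + x 4 - x 0, x 0] : Fin 7 → ℕ) 4 = x 4 := rfl
    have v5 : (![x 0, x 2 + x 4 - x 0, x 2, x 0, x 4, x 2 + x 4 - x 0, x 0] : Fin 7 → ℕ) 5 = x 2 + x 4 - x 0 := rfl
    have v6 : (![x 0, x 2 + x 4 - x 0, x 2, x 0, x 4, x 2 + x 4 - x 0, x 0] : Fin 7 → ℕ) 6 = x 0 := rfl
    have hcy : cyc 7 P7 (![x 0, x 2 + x 4 - x 0, x 2, x 0, x 4, x 2 + x 4 - x 0, x 0] : Fin 7 → ℕ) := by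
      apply cycW_ref0 <;> simp only [v0, v1, v2, v3, v4, v5, v6] <;> omega
    refine ⟨_, ⟨?_, ?_, 2, by norm_num, 6, ?_⟩, hcy⟩
    · intro hEq; exact hx (hEq ▸ hcy)
    · apply fin7_forall <;> simp only [v0, v1, v2, v3, v4, v5, v6] <;> omega
    · apply fin7_forall
      · exact fun hc => absurd (rfl : (![x 0, x 2 + x 4 - x 0, x 2, x 0, x 4, x 2 + x 4 - x 0, x 0] : Fin 7 → ℕ) 0 = x 0) hc
      · exact fun _ => ⟨1, by norm_num, by decide⟩
      · exact fun hc => absurd (rfl : (![x 0, x 2 + x 4 - x 0, x 2, x 0, x 4, x 2 + x 4 - x 0, x 0] : Fin 7 → ℕ) 2 = x 2) hc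
      · exact fun _ => ⟨2, by norm_num, by decide⟩
      · exact fun hc => absurd (rfl : (![x 0, x 2 + x 4 - x 0, x 2, x 0, x 4, x 2 + x 4 - x 0, x 0] : Fin 7 → ℕ) 4 = x 4) hc
      · exact fun _ => ⟨3, by norm_num, by decide⟩
      · exact fun _ => ⟨0, by norm_num, by decide⟩
  by_cases hg4 : x 3 + x 5 ≤ x 0 + x 2 ∧ x 3 + x 5 ≤ x 0 + x 6
  · have v0 : (![x 0, x 0, x 3 + x 5 - x 0, x 3, x 0, x 5, x 3 + x 5 - x 0] : Fin 7 → ℕ) 0 = x 0 := rfl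
    have v1 : (![x 0, x 0, x 3 + x 5 - x 0, x 3, x 0, x 5, x 3 + x 5 - x 0] : Fin 7 → ℕ) 1 = x 0 := rfl
    have v2 : (![x 0, x 0, x 3 + x 5 - x 0, x 3, x 0, x 5, x 3 + x 5 - x 0] : Fin 7 → ℕ) 2 = x 3 + x 5 - x 0 := rfl
    have v3 : (![x 0, x 0, x 3 + x 5 - x 0, x 3, x 0, x 5, x 3 + x 5 - x 0] : Fin 7 → ℕ) 3 = x 3 := rfl
    have v4 : (![x 0, x 0, x 3 + x 5 - x 0, x 3, x 0, x 5, x 3 + x 5 - x 0] : Fin 7 → ℕ) 4 = x 0 := rfl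
    have v5 : (![x 0, x 0, x 3 + x 5 - x 0, x 3, x 0, x 5, x 3 + x 5 - x 0] : Fin 7 → ℕ) 5 = x 5 := rfl
    have v6 : (![x 0, x 0, x 3 + x 5 - x 0, x 3, x 0, x 5, x 3 + x 5 - x 0] : Fin 7 → ℕ) 6 = x 3 + x 5 - x 0 := rfl
    have hcy : cyc 7 P7 (![x 0, x 0, x 3 + x 5 - x 0, x 3, x 0, x 5, x 3 + x 5 - x 0] : Fin 7 → ℕ) := by
      apply cycW_rot0 <;> simp only [v0, v1, v2, v3, v4, v5, v6] <;> omega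
    refine ⟨_, ⟨?_, ?_, 2, by norm_num, 2, ?_⟩, hcy⟩
    · intro hEq; exact hx (hEq ▸ hcy)
    · apply fin7_forall <;> simp only [v0, v1, v2, v3, v4, v5, v6] <;> omega
    · apply fin7_forall
      · exact fun hc => absurd (rfl : (![x 0, x 0, x 3 + x 5 - x 0, x 3, x 0, x 5, x 3 + x 5 - x 0] : Fin 7 → ℕ) 0 = x 0) hc
      · exact fun _ => ⟨3, by norm_num, by decide⟩
      · exact fun _ => ⟨0, by norm_num, by decide⟩
      · exact fun hc => absurd (rfl : (![x 0, x 0, x 3 + x 5 - x 0, x 3, x 0, x 5, x 3 + x 5 - x 0] : Fin 7 → ℕ) 3 = x 3) hc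
      · exact fun _ => ⟨1, by norm_num, by decide⟩
      · exact fun hc => absurd (rfl : (![x 0, x 0, x 3 + x 5 - x 0, x 3, x 0, x 5, x 3 + x 5 - x 0] : Fin 7 → ℕ) 5 = x 5) hc
      · exact fun _ => ⟨2, by norm_num, by decide⟩
  by_cases hg5 : x 5 ≤ x 2 ∧ x 2 ≤ x 6 ∧ x 0 + x 2 ≤ x 3 + x 5
  · have v0 : (![x 0, x 0, x 2, x 0 + x 2 - x 5, x 0, x 5, x 2] : Fin 7 → ℕ) 0 = x 0 := rfl
    have v1 : (![x 0, x 0, x 2, x 0 + x 2 - x 5, x 0, x 5, x 2] : Fin 7 → ℕ) 1 = x 0 := rfl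
    have v2 : (![x 0, x 0, x 2, x 0 + x 2 - x 5, x 0, x 5, x 2] : Fin 7 → ℕ) 2 = x 2 := rfl
    have v3 : (![x 0, x 0, x 2, x 0 + x 2 - x 5, x 0, x 5, x 2] : Fin 7 → ℕ) 3 = x 0 + x 2 - x 5 := rfl
    have v4 : (![x 0, x 0, x 2, x 0 + x 2 - x 5, x 0, x 5, x 2] : Fin 7 → ℕ) 4 = x 0 := rfl
    have v5 : (![x 0, x 0, x 2, x 0 + x 2 - x 5, x 0, x 5, x 2] : Fin 7 → ℕ) 5 = x 5 := rfl
    have v6 : (![x 0, x 0, x 2, x 0 + x 2 - x 5, x 0, x 5, x 2] : Fin 7 → ℕ) 6 = x 2 := rfl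
    have hcy : cyc 7 P7 (![x 0, x 0, x 2, x 0 + x 2 - x 5, x 0, x 5, x 2] : Fin 7 → ℕ) := by
      apply cycW_rot0 <;> simp only [v0, v1, v2, v3, v4, v5, v6] <;> omega
    refine ⟨_, ⟨?_, ?_, 2, by norm_num, 4, ?_⟩, hcy⟩
    · intro hEq; exact hx (hEq ▸ hcy)
    · apply fin7_forall <;> simp only [v0, v1, v2, v3, v4, v5, v6] <;> omega
    · apply fin7_forall
      · exact fun hc => absurd (rfl : (![x 0, x 0, x 2, x 0 + x 2 - x 5, x 0, x 5, x 2] : Fin 7 → ℕ) 0 = x 0) hc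
      · exact fun _ => ⟨2, by norm_num, by decide⟩
      · exact fun hc => absurd (rfl : (![x 0, x 0, x 2, x 0 + x 2 - x 5, x 0, x 5, x 2] : Fin 7 → ℕ) 2 = x 2) hc
      · exact fun _ => ⟨3, by norm_num, by decide⟩
      · exact fun _ => ⟨0, by norm_num, by decide⟩
      · exact fun hc => absurd (rfl : (![x 0, x 0, x 2, x 0 + x 2 - x 5, x 0, x 5, x 2] : Fin 7 → ℕ) 5 = x 5) hc
      · exact fun _ => ⟨1, by norm_num, by decide⟩
  by_cases hg6 : x 6 ≤ x 5 ∧ x 5 ≤ x 2 ∧ x 0 + x 5 ≤ x 1 + x 6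
  · have v0 : (![x 0, x 0 + x 5 - x 6, x 5, x 0, x 0, x 5, x 6] : Fin 7 → ℕ) 0 = x 0 := rfl
    have v1 : (![x 0, x 0 + x 5 - x 6, x 5, x 0, x 0, x 5, x 6] : Fin 7 → ℕ) 1 = x 0 + x 5 - x 6 := rfl
    have v2 : (![x 0, x 0 + x 5 - x 6, x 5, x 0, x 0, x 5, x 6] : Fin 7 → ℕ) 2 = x 5 := rfl
    have v3 : (![x 0, x 0 + x 5 - x 6, x 5, x 0, x 0, x 5, x 6] : Fin 7 → ℕ) 3 = x 0 := rfl
    have v4 : (![x 0, x 0 + x 5 - x 6, x 5, x 0, x 0, x 5, x 6] : Fin 7 → ℕ) 4 = x 0 := rfl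
    have v5 : (![x 0, x 0 + x 5 - x 6, x 5, x 0, x 0, x 5, x 6] : Fin 7 → ℕ) 5 = x 5 := rfl
    have v6 : (![x 0, x 0 + x 5 - x 6, x 5, x 0, x 0, x 5, x 6] : Fin 7 → ℕ) 6 = x 6 := rfl
    have hcy : cyc 7 P7 (![x 0, x 0 + x 5 - x 6, x 5, x 0, x 0, x 5, x 6] : Fin 7 → ℕ) := by
      apply cycW_rot3 <;> simp only [v0, v1, v2, v3, v4, v5, v6] <;> omega
    refine ⟨_, ⟨?_, ?_, 1, by norm_num, 1, ?_⟩, hcy⟩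
    · intro hEq; exact hx (hEq ▸ hcy)
    · apply fin7_forall <;> simp only [v0, v1, v2, v3, v4, v5, v6] <;> omega
    · apply fin7_forall
      · exact fun hc => absurd (rfl : (![x 0, x 0 + x 5 - x 6, x 5, x 0, x 0, x 5, x 6] : Fin 7 → ℕ) 0 = x 0) hc
      · exact fun _ => ⟨0, by norm_num, by decide⟩
      · exact fun _ => ⟨1, by norm_num, by decide⟩
      · exact fun _ => ⟨2, by norm_num, by decide⟩
      · exact fun _ => ⟨3, by norm_num, by decide⟩
      · exact fun hc => absurd (rfl : (![x 0, x 0 + x 5 - x 6, x 5, x 0, x 0, x 5, x 6] : Fin 7 → ℕ) 5 = x 5) hc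
      · exact fun hc => absurd (rfl : (![x 0, x 0 + x 5 - x 6, x 5, x 0, x 0, x 5, x 6] : Fin 7 → ℕ) 6 = x 6) hc
  by_cases hg7 : x 1 ≤ x 2 ∧ x 2 ≤ x 5 ∧ x 0 + x 2 ≤ x 6 + x 1
  · have v0 : (![x 0, x 1, x 2, x 0, x 0, x 2, x 0 + x 2 - x 1] : Fin 7 → ℕ) 0 = x 0 := rfl
    have v1 : (![x 0, x 1, x 2, x 0, x 0, x 2, x 0 + x 2 - x 1] : Fin 7 → ℕ) 1 = x 1 := rfl
    have v2 : (![x 0, x 1, x 2, x 0, x 0, x 2, x 0 + x 2 - x 1] : Fin 7 → ℕ) 2 = x 2 := rfl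
    have v3 : (![x 0, x 1, x 2, x 0, x 0, x 2, x 0 + x 2 - x 1] : Fin 7 → ℕ) 3 = x 0 := rfl
    have v4 : (![x 0, x 1, x 2, x 0, x 0, x 2, x 0 + x 2 - x 1] : Fin 7 → ℕ) 4 = x 0 := rfl
    have v5 : (![x 0, x 1, x 2, x 0, x 0, x 2, x 0 + x 2 - x 1] : Fin 7 → ℕ) 5 = x 2 := rfl
    have v6 : (![x 0, x 1, x 2, x 0, x 0, x 2, x 0 + x 2 - x 1] : Fin 7 → ℕ) 6 = x 0 + x 2 - x 1 := rfl
    have hcy : cyc 7 P7 (![x 0, x 1, x 2, x 0, x 0, x 2, x 0 + x 2 - x 1] : Fin 7 → ℕ) := by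
      apply cycW_rot3 <;> simp only [v0, v1, v2, v3, v4, v5, v6] <;> omega
    refine ⟨_, ⟨?_, ?_, 1, by norm_num, 3, ?_⟩, hcy⟩
    · intro hEq; exact hx (hEq ▸ hcy)
    · apply fin7_forall <;> simp only [v0, v1, v2, v3, v4, v5, v6] <;> omega
    · apply fin7_forall
      · exact fun hc => absurd (rfl : (![x 0, x 1, x 2, x 0, x 0, x 2, x 0 + x 2 - x 1] : Fin 7 → ℕ) 0 = x 0) hc
      · exact fun hc => absurd (rfl : (![x 0, x 1, x 2, x 0, x 0, x 2, x 0 + x 2 - x 1] : Fin 7 → ℕ) 1 = x 1) hc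
      · exact fun hc => absurd (rfl : (![x 0, x 1, x 2, x 0, x 0, x 2, x 0 + x 2 - x 1] : Fin 7 → ℕ) 2 = x 2) hc
      · exact fun _ => ⟨0, by norm_num, by decide⟩
      · exact fun _ => ⟨1, by norm_num, by decide⟩
      · exact fun _ => ⟨2, by norm_num, by decide⟩
      · exact fun _ => ⟨3, by norm_num, by decide⟩
  by_cases hg8 : x 2 ≤ x 5 ∧ x 5 ≤ x 1 ∧ x 0 + x 5 ≤ x 4 + x 2
  · have v0 : (![x 0, x 5, x 2, x 0, x 0 + x 5 - x 2, x 5, x 0] : Fin 7 → ℕ) 0 = x 0 := rfl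
    have v1 : (![x 0, x 5, x 2, x 0, x 0 + x 5 - x 2, x 5, x 0] : Fin 7 → ℕ) 1 = x 5 := rfl
    have v2 : (![x 0, x 5, x 2, x 0, x 0 + x 5 - x 2, x 5, x 0] : Fin 7 → ℕ) 2 = x 2 := rfl
    have v3 : (![x 0, x 5, x 2, x 0, x 0 + x 5 - x 2, x 5, x 0] : Fin 7 → ℕ) 3 = x 0 := rfl
    have v4 : (![x 0, x 5, x 2, x 0, x 0 + x 5 - x 2, x 5, x 0] : Fin 7 → ℕ) 4 = x 0 + x 5 - x 2 := rfl
    have v5 : (![x 0, x 5, x 2, x 0, x 0 + x 5 - x 2, x 5, x 0] : Fin 7 → ℕ) 5 = x 5 := rfl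
    have v6 : (![x 0, x 5, x 2, x 0, x 0 + x 5 - x 2, x 5, x 0] : Fin 7 → ℕ) 6 = x 0 := rfl
    have hcy : cyc 7 P7 (![x 0, x 5, x 2, x 0, x 0 + x 5 - x 2, x 5, x 0] : Fin 7 → ℕ) := by
      apply cycW_ref0 <;> simp only [v0, v1, v2, v3, v4, v5, v6] <;> omega
    refine ⟨_, ⟨?_, ?_, 2, by norm_num, 4, ?_⟩, hcy⟩
    · intro hEq; exact hx (hEq ▸ hcy)
    · apply fin7_forall <;> simp only [v0, v1, v2, v3, v4, v5, v6] <;> omega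
    · apply fin7_forall
      · exact fun hc => absurd (rfl : (![x 0, x 5, x 2, x 0, x 0 + x 5 - x 2, x 5, x 0] : Fin 7 → ℕ) 0 = x 0) hc
      · exact fun _ => ⟨2, by norm_num, by decide⟩
      · exact fun hc => absurd (rfl : (![x 0, x 5, x 2, x 0, x 0 + x 5 - x 2, x 5, x 0] : Fin 7 → ℕ) 2 = x 2) hc
      · exact fun _ => ⟨3, by norm_num, by decide⟩
      · exact fun _ => ⟨0, by norm_num, by decide⟩
      · exact fun hc => absurd (rfl : (![x 0, x 5, x 2, x 0, x 0 + x 5 - x 2, x 5, x 0] : Fin 7 → ℕ) 5 = x 5) hc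
      · exact fun _ => ⟨1, by norm_num, by decide⟩
  exfalso
  revert hg0 hg1 hg2 hg3 hg4 hg5 hg6 hg7 hg8
  omega

lemma lemB (x : Fin 7 → ℕ) (hx : ¬ cyc 7 P7 x) :
    ∃ y, ecnMove 7 {1, 2} 4 x y ∧ cyc 7 P7 y := by
  obtain ⟨m, -, hm⟩ := Finset.exists_min_image (Finset.univ : Finset (Fin 7)) x
    ⟨0, Finset.mem_univ 0⟩
  have hm7 := m.isLt
  have hmin : ∀ j, rotF m.1 x 0 ≤ rotF m.1 x j := by
    intro j
    have h0 : rotF m.1 x 0 = x m := congrArg x (Fin.ext (show (0 + m.1) % 7 = m.1 by omega))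
    rw [h0]
    exact hm _ (Finset.mem_univ _)
  have hx' : ¬ cyc 7 P7 (rotF m.1 x) := by
    intro h
    have h2 := cyc_to_rot (7 - m.1) h
    rw [rotF_rotF, rotF_id (7 - m.1 + m.1) x (by omega)] at h2
    exact hx h2
  obtain ⟨y', mv', cy'⟩ := lemB0 (rotF m.1 x) hmin hx'
  have mv2 := move_rot (7 - m.1) mv'
  rw [rotF_rotF, rotF_id (7 - m.1 + m.1) x (by omega)] at mv2
  exact ⟨rotF (7 - m.1) y', mv2, cyc_to_rot (7 - m.1) cy'⟩


lemma key2 : ∀ N x, x 0 + x 1 + x 2 + x 3 + x 4 + x 5 + x 6 < N →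
    ¬ cyc 7 P7 x → IsN (ecnMove 7 {1, 2} 4) x := by
  intro N
  induction N with
  | zero => intro x hlt _; exact absurd hlt (Nat.not_lt_zero _)
  | succ N ih =>
    intro x hlt hc
    obtain ⟨y, mv, cy⟩ := lemB x hc
    have hs1 := (move_elim x y mv).2.1
    refine IsN.intro x y mv (fun z hz => ?_)
    have hs2 := (move_elim y z hz).2.1
    exact ih z (by omega) (lemA cy hz)

lemma IsN_dest {α : Type*} {move : α → α → Prop} {x : α} (h : IsN move x) :
    ∃ y, move x y ∧ ∀ z, move y z → IsN move z := by
  cases h with | intro x y hxy hy => exact ⟨y, hxy, hy⟩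

lemma notN : ∀ N x, x 0 + x 1 + x 2 + x 3 + x 4 + x 5 + x 6 < N →
    cyc 7 P7 x → ¬ IsN (ecnMove 7 {1, 2} 4) x := by
  intro N
  induction N with
  | zero => intro x hlt _; exact absurd hlt (Nat.not_lt_zero _)
  | succ N ih =>
    intro x hlt hc hn
    obtain ⟨y, mv, hy⟩ := IsN_dest hn
    have hs1 := (move_elim x y mv).2.1
    have hnc : ¬ cyc 7 P7 y := lemA hc mv
    obtain ⟨z, mvz, cz⟩ := lemB y hnc
    have hs2 := (move_elim y z mvz).2.1
    exact ih z (by omega) cz (hy z mvz)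

end ECN714

theorem ecn7_12_4_P_iff (n : Fin 7 → ℕ) :
    IsP (ecnMove 7 {1, 2} 4) n ↔
      cyc 7 (fun x => x 0 = x 1 ∧ x 1 = x 4 ∧ x 2 = x 6 ∧ x 3 + x 5 = x 0 + x 2 ∧
        ∀ i, x 0 ≤ x i) n := by
  show IsP (ecnMove 7 {1, 2} 4) n ↔ cyc 7 ECN714.P7 n
  constructor
  · intro hP
    by_contra hC
    obtain ⟨y, mv, cy⟩ := ECN714.lemB n hC
    exact ECN714.notN _ y (Nat.lt_succ_self _) cy (hP y mv)
  · intro hC y mv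
    exact ECN714.key2 (y 0 + y 1 + y 2 + y 3 + y 4 + y 5 + y 6 + 1) y
      (Nat.lt_succ_self _) (ECN714.lemA hC mv)
end
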